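/- arXiv:1102.5136 — 7 statements merged into one kernel-verified Lean document; each statement's English description precedes it below -/
import Mathlib

section
/- Let m ≥ 2 and let A = (A(i,j))_{i,j=0}^{m-1} be a primitive 0-1 matrix, and let q ≥ 2 be an integer. Then there exists a unique vector (t_0, …, t_{m-1}) of real numbers satisfying t_i > 1 and t_i^q = Σ_{j=0}^{m-1} A(i,j) t_j for every i = 0, …, m-1. -/
/-!
Existence: `t ↦ (A t)^(1/q)` is monotone and maps the box `[1, m]^m` into itself (each row of `A`
contains a `1`, and `m · m ≤ m^q`), so by Tarski it has a fixed point `t ≥ 1`. Such a `t` is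
strictly above `1`: if `t i = 1`, then row `i` of `A` is a basis vector `e j` with `t j = 1`, so row
`i` of every power `A^n` is a basis vector too, which has a zero entry as soon as `m ≥ 2`.
Uniqueness: for two solutions `u, v > 0`, let `c = max u_i / v_i` be attained at `i`; then
`c^q v_i^q = u_i^q = (A u)_i ≤ c (A v)_i = c v_i^q`, so `c ≤ 1` because `q ≥ 2`, i.e. `u ≤ v`.
-/

open Matrix

section

variable {ι R : Type*} [Fintype ι]

theorem Matrix.mulVec_mono_of_nonneg {A : Matrix ι ι ℝ} (hA : ∀ i j, 0 ≤ A i j) {u v : ι → ℝ}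
    (h : u ≤ v) : A *ᵥ u ≤ A *ᵥ v :=
  fun i => Finset.sum_le_sum fun j _ => mul_le_mul_of_nonneg_left (h j) (hA i j)

variable [DecidableEq ι]

theorem Matrix.exists_apply_ne_zero_of_pow_pos [Semiring R] [Preorder R] [Nontrivial ι]
    {A : Matrix ι ι R} {n : ℕ} (hA : ∀ i j, 0 < (A ^ n) i j) (i : ι) : ∃ j, A i j ≠ 0 := by
  by_contra! hzero
  cases n with
  | zero =>
    obtain ⟨i', hi'⟩ := exists_ne i
    simpa [one_apply_ne hi'.symm] using hA i i'
  | succ n =>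
    simpa [pow_succ', mul_apply, hzero] using hA i i

theorem Matrix.pow_row_eq_single [Semiring R] {A : Matrix ι ι R} {S : Set ι}
    (hS : ∀ i ∈ S, ∃ j ∈ S, A i = Pi.single j 1) (n : ℕ) :
    ∀ i ∈ S, ∃ j ∈ S, (A ^ n) i = Pi.single j 1 := by
  induction n with
  | zero => exact fun i hi => ⟨i, hi, funext fun j => one_eq_pi_single⟩
  | succ n ih =>
    intro i hi
    obtain ⟨j, hj, hAi⟩ := hS i hi
    rw [pow_succ', mul_apply_eq_vecMul, hAi, single_vecMul, one_smul]
    exact ih j hj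

theorem eq_single_of_dotProduct_le_one {a t : ι → ℝ} (ha : ∀ j, a j = 0 ∨ a j = 1) {j₀ : ι}
    (hj₀ : a j₀ = 1) (ht : 1 ≤ t) (h : a ⬝ᵥ t ≤ 1) : t j₀ = 1 ∧ a = Pi.single j₀ 1 := by
  have hterm : ∀ k, 0 ≤ a k * t k := fun k =>
    mul_nonneg (by rcases ha k with hk | hk <;> simp [hk]) (zero_le_one.trans (ht k))
  have htj₀ : 1 ≤ t j₀ := ht j₀
  rw [dotProduct, ← Finset.add_sum_erase _ _ (Finset.mem_univ j₀), hj₀, one_mul] at h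
  have hrest : 0 ≤ ∑ k ∈ Finset.univ.erase j₀, a k * t k := Finset.sum_nonneg fun k _ => hterm k
  have hrest_zero : ∑ k ∈ Finset.univ.erase j₀, a k * t k = 0 := by linarith
  refine ⟨by linarith, funext fun k => ?_⟩
  rcases eq_or_ne k j₀ with rfl | hk
  · simp [hj₀]
  · have := (Finset.sum_eq_zero_iff_of_nonneg fun k _ => hterm k).1 hrest_zero k (by simp [hk])
    have htk : t k ≠ 0 := (zero_lt_one.trans_le (ht k)).ne'
    simpa [hk, htk] using this

theorem one_lt_of_pow_eq_mulVec [Nontrivial ι] {A : Matrix ι ι ℝ}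
    (hA : ∀ i j, A i j = 0 ∨ A i j = 1) (hrow : ∀ i, ∃ j, A i j = 1) {n : ℕ}
    (hn : ∀ i j, 0 < (A ^ n) i j) {q : ℕ} {t : ι → ℝ} (ht : 1 ≤ t) (heq : t ^ q = A *ᵥ t) (i : ι) :
    1 < t i := by
  have hS : ∀ i ∈ {i | t i = 1}, ∃ j ∈ {i | t i = 1}, A i = Pi.single j 1 := by
    intro i (hi : t i = 1)
    obtain ⟨j, hj⟩ := hrow i
    have hAt : A i ⬝ᵥ t ≤ 1 := by
      rw [← mulVec, ← heq, Pi.pow_apply, hi, one_pow]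
    exact ⟨j, eq_single_of_dotProduct_le_one (hA i) hj ht hAt⟩
  by_contra! hi
  obtain ⟨j, -, hj⟩ := pow_row_eq_single hS n i (le_antisymm hi (ht i))
  obtain ⟨k, hk⟩ := exists_ne j
  simpa [hj, hk] using hn i k

end

theorem le_of_pow_eq_mulVec {ι : Type*} [Fintype ι] {A : Matrix ι ι ℝ} (hA : ∀ i j, 0 ≤ A i j)
    {q : ℕ} (hq : 1 < q) {u v : ι → ℝ} (hv : ∀ i, 0 < v i) (hu : u ^ q = A *ᵥ u)
    (hv' : v ^ q = A *ᵥ v) : u ≤ v := by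
  intro j
  by_contra! hj
  have : Nonempty ι := ⟨j⟩
  obtain ⟨i, hi⟩ := Finite.exists_max fun i => u i / v i
  set c := u i / v i
  have hc : 1 < c := ((one_lt_div (hv j)).2 hj).trans_le (hi j)
  have hu_le : u ≤ c • v := fun k => (div_le_iff₀ (hv k)).1 (hi k)
  have hui : u i = c * v i := (div_mul_cancel₀ _ (hv i).ne').symm
  have hcq : c ^ q * v i ^ q ≤ c * v i ^ q := calc
    c ^ q * v i ^ q = u i ^ q := by rw [hui, mul_pow]
    _ = (A *ᵥ u) i := congrFun hu i
    _ ≤ (A *ᵥ (c • v)) i := mulVec_mono_of_nonneg hA hu_le i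
    _ = c * v i ^ q := by rw [mulVec_smul, ← hv']; rfl
  have hcq_le : c ^ q ≤ c := le_of_mul_le_mul_right hcq (pow_pos (hv i) q)
  have hc_lt : c < c ^ q := by simpa using pow_lt_pow_right₀ hc hq
  linarith

theorem exists_one_le_pow_eq_mulVec {ι : Type*} [Fintype ι] [Nonempty ι] {A : Matrix ι ι ℝ}
    (hA0 : ∀ i j, 0 ≤ A i j) (hA1 : ∀ i j, A i j ≤ 1) (hrow : ∀ i, ∃ j, A i j = 1)
    {q : ℕ} (hq : 1 < q) : ∃ t : ι → ℝ, 1 ≤ t ∧ t ^ q = A *ᵥ t := by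
  set M : ℝ := (Fintype.card ι : ℝ)
  have hM : 1 ≤ M := Nat.one_le_cast.2 Fintype.card_pos
  have : Fact ((1 : ι → ℝ) ≤ fun _ => M) := ⟨fun _ => hM⟩
  have hbox (t : ι → ℝ) (ht : t ∈ Set.Icc 1 fun _ => M) (i : ι) :
      1 ≤ (A *ᵥ t) i ∧ (A *ᵥ t) i ≤ M ^ q := by
    obtain ⟨j, hj⟩ := hrow i
    have ht0 (k : ι) : 0 ≤ t k := zero_le_one.trans (ht.1 k)
    have hterm (k : ι) : 0 ≤ A i k * t k := mul_nonneg (hA0 i k) (ht0 k)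
    constructor
    · calc 1 ≤ A i j * t j := by simpa [hj] using ht.1 j
        _ ≤ (A *ᵥ t) i := Finset.single_le_sum (fun k _ => hterm k) (Finset.mem_univ j)
    · calc (A *ᵥ t) i ≤ ∑ _k : ι, M :=
            Finset.sum_le_sum fun k _ => (mul_le_of_le_one_left (ht0 k) (hA1 i k)).trans (ht.2 k)
        _ = M ^ 2 := by simp [M, sq]
        _ ≤ M ^ q := pow_le_pow_right₀ hM hq
  let F : (Set.Icc (1 : ι → ℝ) fun _ => M) →o Set.Icc (1 : ι → ℝ) fun _ => M :=
    { toFun := fun t => ⟨fun i => (A *ᵥ t) i ^ (q⁻¹ : ℝ), fun i =>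
          Real.one_le_rpow (hbox t t.2 i).1 (by positivity), fun i =>
          (Real.rpow_inv_le_iff_of_pos (by linarith [(hbox t t.2 i).1]) (by linarith)
            (by positivity)).2 (by simpa using (hbox t t.2 i).2)⟩
      monotone' := fun t s hts i =>
        Real.rpow_le_rpow (by linarith [(hbox t t.2 i).1]) (mulVec_mono_of_nonneg hA0 hts i)
          (by positivity) }
  let t := OrderHom.lfp F
  refine ⟨t, t.2.1, funext fun i => ?_⟩
  have hfix : (A *ᵥ t) i ^ (q⁻¹ : ℝ) = (t : ι → ℝ) i :=
    congrFun (congrArg Subtype.val F.map_lfp) i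
  rw [Pi.pow_apply, ← hfix, Real.rpow_inv_natCast_pow (by linarith [(hbox t t.2 i).1]) (by omega)]

/-- **Lemma 1.2.** For a primitive 0-1 matrix `A` and an integer `q ≥ 2` there is a unique
vector `(t_i)` with `t_i > 1` and `t_i^q = Σ_j A(i,j) t_j` for all `i`. -/
theorem stmt0 (m q : ℕ) (hm : 2 ≤ m) (hq : 2 ≤ q)
    (A : Matrix (Fin m) (Fin m) ℝ)
    (hA01 : ∀ i j, A i j = 0 ∨ A i j = 1)
    (hAprim : ∃ n : ℕ, ∀ i j, 0 < (A ^ n) i j) :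
    ∃! t : Fin m → ℝ, (∀ i, 1 < t i) ∧ ∀ i, t i ^ q = ∑ j, A i j * t j := by
  have : Nontrivial (Fin m) := Fin.nontrivial_iff_two_le.2 hm
  obtain ⟨n, hn⟩ := hAprim
  have hrow (i : Fin m) : ∃ j, A i j = 1 :=
    (exists_apply_ne_zero_of_pow_pos hn i).imp fun j => (hA01 i j).resolve_left
  have hA0 (i j : Fin m) : 0 ≤ A i j := by rcases hA01 i j with h | h <;> simp [h]
  have hA1 (i j : Fin m) : A i j ≤ 1 := by rcases hA01 i j with h | h <;> simp [h]
  obtain ⟨t, ht1, ht⟩ := exists_one_le_pow_eq_mulVec hA0 hA1 hrow hq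
  have htgt := one_lt_of_pow_eq_mulVec hA01 hrow hn ht1 ht
  refine ⟨t, ⟨htgt, fun i => congrFun ht i⟩, fun s ⟨hs1, hs⟩ => ?_⟩
  have hs' : s ^ q = A *ᵥ s := funext hs
  exact le_antisymm (le_of_pow_eq_mulVec hA0 hq (fun i => one_pos.trans (htgt i)) hs' ht)
    (le_of_pow_eq_mulVec hA0 hq (fun i => one_pos.trans (hs1 i)) ht hs')
end

section
/- Let Γ = (V, E) be a directed graph (with V finite or countably infinite) in which every vertex has at least one outgoing edge and the outdegree of every vertex is at most M, where M < ∞, and let q > 1 be an integer. Then there exists a unique function t : V → [1, M^{1/(q-1)}] satisfying t(v)^q = Σ_{w : (v,w) ∈ E} t(w) for every vertex v ∈ V. -/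
/-!
Solutions are the fixed points of the monotone map `t ↦ (v ↦ (∑_{w ∈ E v} t w) ^ (1/q))`. For
`B = M ^ (1/(q-1))` we have `M * B = B ^ q`, so this map sends the complete lattice `V → [1, B]`
into itself, and Knaster–Tarski gives a solution. For uniqueness, if `t, s` are solutions with
values in `[1, B]` and `c = sup t/s`, then `t v ^ q ≤ c * s v ^ q`, hence `c ≤ c ^ (1/q)`,
which forces `c ≤ 1`, i.e. `t ≤ s`.
-/

section PowSum

variable {V : Type*} (E : V → Finset V) {q : ℕ}

theorem le_rpow_inv_mul_of_le_mul {t s : V → ℝ} {c : ℝ} (hq : q ≠ 0)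
    (ht : ∀ v, t v ^ q = ∑ w ∈ E v, t w) (hs : ∀ v, s v ^ q = ∑ w ∈ E v, s w)
    (ht₀ : ∀ v, 0 ≤ t v) (hs₀ : ∀ v, 0 ≤ s v) (hc : 0 ≤ c) (hts : ∀ w, t w ≤ c * s w)
    (v : V) : t v ≤ c ^ (q⁻¹ : ℝ) * s v := by
  refine (pow_le_pow_iff_left₀ (ht₀ v) (by positivity [hs₀ v]) hq).mp ?_
  calc t v ^ q = ∑ w ∈ E v, t w := ht v
    _ ≤ ∑ w ∈ E v, c * s w := Finset.sum_le_sum fun w _ => hts w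
    _ = (c ^ (q⁻¹ : ℝ) * s v) ^ q := by
      rw [← Finset.mul_sum, ← hs v, mul_pow, Real.rpow_inv_natCast_pow hc hq]

theorem le_of_pow_eq_sum {t s : V → ℝ} (hq : 1 < q)
    (ht : ∀ v, t v ^ q = ∑ w ∈ E v, t w) (hs : ∀ v, s v ^ q = ∑ w ∈ E v, s w)
    (ht₀ : ∀ v, 0 ≤ t v) (hs₀ : ∀ v, 0 < s v)
    (hbdd : BddAbove (Set.range fun v => t v / s v)) (v : V) : t v ≤ s v := by
  set c := ⨆ v, t v / s v
  have hc₀ : 0 ≤ c := Real.iSup_nonneg fun v => div_nonneg (ht₀ v) (hs₀ v).le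
  have hts : ∀ w, t w ≤ c * s w := fun w =>
    (div_le_iff₀ (hs₀ w)).mp (le_ciSup hbdd w)
  have hc_le_root : c ≤ c ^ (q⁻¹ : ℝ) := Real.iSup_le (fun w => (div_le_iff₀ (hs₀ w)).mpr <|
    le_rpow_inv_mul_of_le_mul E (by omega) ht hs ht₀ (fun w => (hs₀ w).le) hc₀ hts w)
    (by positivity)
  have hc₁ : c ≤ 1 := by
    by_contra! h
    refine (Real.rpow_lt_self_of_one_lt h ?_).not_ge hc_le_root
    exact inv_lt_one_of_one_lt₀ (by exact_mod_cast hq)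
  calc t v ≤ c * s v := hts v
    _ ≤ s v := mul_le_of_le_one_left (hs₀ v).le hc₁

theorem rpow_inv_sum_mem_Icc {M : ℕ} {B : ℝ} (hq : q ≠ 0) (hout : ∀ v, (E v).Nonempty)
    (hdeg : ∀ v, (E v).card ≤ M) (hMB : (M : ℝ) ≤ B ^ (q - 1)) {t : V → ℝ}
    (ht : ∀ w, t w ∈ Set.Icc 1 B) (v : V) :
    (∑ w ∈ E v, t w) ^ (q⁻¹ : ℝ) ∈ Set.Icc 1 B := by
  have hB₀ : 0 ≤ B := zero_le_one.trans (ht v).1 |>.trans (ht v).2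
  have hsum₁ : 1 ≤ ∑ w ∈ E v, t w := calc
    (1 : ℝ) ≤ (E v).card := by exact_mod_cast (hout v).card_pos
    _ = ∑ w ∈ E v, (1 : ℝ) := by simp
    _ ≤ ∑ w ∈ E v, t w := Finset.sum_le_sum fun w _ => (ht w).1
  have hsumB : ∑ w ∈ E v, t w ≤ B ^ q := calc
    ∑ w ∈ E v, t w ≤ (E v).card * B := by
      simpa using Finset.sum_le_sum fun w (_ : w ∈ E v) => (ht w).2
    _ ≤ M * B := by gcongr; exact_mod_cast hdeg v
    _ ≤ B ^ (q - 1) * B := by gcongr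
    _ = B ^ q := pow_sub_one_mul hq B
  refine ⟨Real.one_le_rpow hsum₁ (by positivity), ?_⟩
  rw [Real.rpow_inv_le_iff_of_pos (by linarith) hB₀ (by positivity), Real.rpow_natCast]
  exact hsumB

theorem exists_pow_eq_sum_mem_Icc {M : ℕ} {B : ℝ} (hq : q ≠ 0) (hout : ∀ v, (E v).Nonempty)
    (hdeg : ∀ v, (E v).card ≤ M) (hB₁ : 1 ≤ B) (hMB : (M : ℝ) ≤ B ^ (q - 1)) :
    ∃ t : V → ℝ, (∀ v, t v ∈ Set.Icc 1 B) ∧ ∀ v, t v ^ q = ∑ w ∈ E v, t w := by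
  have : Fact (1 ≤ B) := ⟨hB₁⟩
  let Φ : (V → Set.Icc 1 B) →o (V → Set.Icc 1 B) :=
    { toFun := fun t v => ⟨_, rpow_inv_sum_mem_Icc E hq hout hdeg hMB (fun w => (t w).2) v⟩
      monotone' := fun t t' htt' v => Real.rpow_le_rpow
        (Finset.sum_nonneg fun w _ => zero_le_one.trans (t w).2.1)
        (Finset.sum_le_sum fun w _ => htt' w) (by positivity) }
  refine ⟨fun v => Φ.lfp v, fun v => (Φ.lfp v).2, fun v => ?_⟩
  show (Φ.lfp v : ℝ) ^ q = ∑ w ∈ E v, (Φ.lfp w : ℝ)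
  have hfix : (∑ w ∈ E v, (Φ.lfp w : ℝ)) ^ (q⁻¹ : ℝ) = Φ.lfp v :=
    congrArg Subtype.val (congrFun Φ.map_lfp v)
  rw [← hfix, Real.rpow_inv_natCast_pow
    (Finset.sum_nonneg fun w _ => zero_le_one.trans (Φ.lfp w).2.1) hq]

end PowSum

theorem rpow_one_div_sub_one_pow_sub_one {x : ℝ} (hx : 0 ≤ x) {q : ℕ} (hq : 2 ≤ q) :
    (x ^ ((1 : ℝ) / ((q : ℝ) - 1))) ^ (q - 1) = x := by
  have hcast : ((q : ℝ) - 1) = ((q - 1 : ℕ) : ℝ) := by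
    rw [Nat.cast_sub (by omega), Nat.cast_one]
  rw [hcast, one_div, Real.rpow_inv_natCast_pow hx (by omega)]

theorem stmt6_general (V : Type) (E : V → Finset V) (M q : ℕ)
    (hq : 2 ≤ q)
    (hout : ∀ v, (E v).Nonempty)
    (hdeg : ∀ v, (E v).card ≤ M) :
    ∃! t : V → ℝ,
      (∀ v, t v ∈ Set.Icc 1 ((M : ℝ) ^ ((1 : ℝ) / ((q : ℝ) - 1)))) ∧
      ∀ v, t v ^ q = ∑ w ∈ E v, t w := by
  rcases isEmpty_or_nonempty V with _ | ⟨⟨v₀⟩⟩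
  · exact ⟨isEmptyElim, ⟨isEmptyElim, isEmptyElim⟩, fun _ _ => Subsingleton.elim _ _⟩
  set B := (M : ℝ) ^ ((1 : ℝ) / ((q : ℝ) - 1))
  have hq₁ : (1 : ℝ) < q := by exact_mod_cast hq
  have hM₁ : (1 : ℝ) ≤ M := by exact_mod_cast (hout v₀).card_pos.trans_le (hdeg v₀)
  have hB₁ : 1 ≤ B := Real.one_le_rpow hM₁ (div_nonneg zero_le_one (by linarith))
  obtain ⟨t, htB, ht⟩ := exists_pow_eq_sum_mem_Icc E (by omega) hout hdeg hB₁
    (rpow_one_div_sub_one_pow_sub_one (by positivity) hq).ge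
  have hbdd : ∀ {t s : V → ℝ}, (∀ v, t v ∈ Set.Icc 1 B) → (∀ v, s v ∈ Set.Icc 1 B) →
      BddAbove (Set.range fun v => t v / s v) := fun htB hsB =>
    ⟨B, Set.forall_mem_range.2 fun v =>
      (div_le_self (zero_le_one.trans (htB v).1) (hsB v).1).trans (htB v).2⟩
  refine ⟨t, ⟨htB, ht⟩, fun s ⟨hsB, hs⟩ => funext fun v => le_antisymm ?_ ?_⟩
  · exact le_of_pow_eq_sum E (by omega) hs ht (fun v => zero_le_one.trans (hsB v).1)
      (fun v => zero_lt_one.trans_le (htB v).1) (hbdd hsB htB) v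
  · exact le_of_pow_eq_sum E (by omega) ht hs (fun v => zero_le_one.trans (htB v).1)
      (fun v => zero_lt_one.trans_le (hsB v).1) (hbdd htB hsB) v

/-- **Lemma 2.1.** On a countable directed graph with all outdegrees in `[1, M]` and an
integer `q > 1`, there is a unique `[1, M^{1/(q-1)}]`-valued solution of
`t(v)^q = Σ_{w : (v,w) ∈ E} t(w)`. -/
theorem stmt6 (V : Type) [Countable V] (E : V → Finset V) (M q : ℕ)
    (hq : 2 ≤ q)
    (hout : ∀ v, (E v).Nonempty)
    (hdeg : ∀ v, (E v).card ≤ M) :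
    ∃! t : V → ℝ,
      (∀ v, t v ∈ Set.Icc 1 ((M : ℝ) ^ ((1 : ℝ) / ((q : ℝ) - 1)))) ∧
      ∀ v, t v ^ q = ∑ w ∈ E v, t w :=
  stmt6_general V E M q hq hout hdeg
end

section
/- Let m ≥ 2, let q ≥ 2 be an integer, let Ω be a nonempty closed subset of Σ_m, and let μ be a Borel probability measure on Σ_m supported on Ω. Then there exists a unique Borel probability measure P_μ on Σ_m such that for every finite word u of length n ≥ 1, the measure of the cylinder [u] is P_μ[u] = ∏_{i ≤ n, q ∤ i} μ[u|J_i], where u|J_i = u_i u_{qi} ⋯ u_{q^r i} with q^r i ≤ n < q^{r+1} i; moreover P_μ is supported on X_Ω. -/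
open scoped Classical ENNReal
open Filter MeasureTheory Topology

noncomputable section

/-- `Begins x u` : the finite word `u` is a prefix of the sequence `x` (indexed by `ℕ+`). -/
def Begins {m : ℕ} (x : ℕ+ → Fin m) (u : List (Fin m)) : Prop :=
  ∀ j : Fin u.length, x ⟨(j : ℕ) + 1, Nat.succ_pos _⟩ = u.get j

/-- `Cyl u` : the cylinder set of the word `u`. -/
def Cyl {m : ℕ} (u : List (Fin m)) : Set (ℕ+ → Fin m) := {x | Begins x u}

/-- `Pref Ω` : the set of (finite) prefixes of sequences in `Ω`. -/
def Pref {m : ℕ} (Ω : Set (ℕ+ → Fin m)) : Set (List (Fin m)) := {u | ∃ x ∈ Ω, Begins x u}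

/-- number of length-`n` words beginning some sequence of `X`. -/
def NWords {m : ℕ} (n : ℕ) (X : Set (ℕ+ → Fin m)) : ℕ :=
  Set.ncard {u : List (Fin m) | u.length = n ∧ u ∈ Pref X}

/-- restriction of `x` to the geometric progression `J_i = {i, qi, q²i, …}`:
`(x|J_i)_k = x_{q^{k-1} i}` for `k ≥ 1`. -/
def RestrJ {m : ℕ} (q : ℕ+) (x : ℕ+ → Fin m) (i : ℕ+) : ℕ+ → Fin m :=
  fun k => x (q ^ ((k : ℕ) - 1) * i)

/-- the multiplicative subshift `X_Ω = {x : x|J_i ∈ Ω for all i with q ∤ i}`. -/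
def XOm {m : ℕ} (q : ℕ+) (Ω : Set (ℕ+ → Fin m)) : Set (ℕ+ → Fin m) :=
  {x | ∀ i : ℕ+, ¬ q ∣ i → RestrJ q x i ∈ Ω}

/-- the real number `Σ_{k≥1} x_k m^{-k}` with base-`m` digit sequence `x`. -/
def ValMap (m : ℕ) (x : ℕ+ → Fin m) : ℝ := ∑' k : ℕ+, ((x k : ℕ) : ℝ) * (m : ℝ)⁻¹ ^ (k : ℕ)

/-- the subset of `[0,1]` of reals whose base-`m` digit sequence lies in `X`. -/
def XiSet {m : ℕ} (X : Set (ℕ+ → Fin m)) : Set ℝ := {r | ∃ x ∈ X, r = ValMap m x}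

/-- entropy (base-`m` logarithms) of the partition of `Ω` into `k`-cylinders, for a measure
supported on `Ω` (words that are not prefixes of `Ω` get measure `0` and contribute nothing). -/
def Hent (m : ℕ) (μ : Measure (ℕ+ → Fin m)) (k : ℕ) : ℝ :=
  -∑ u : Fin k → Fin m,
    ((μ (Cyl (List.ofFn u))).toReal * Real.logb m (μ (Cyl (List.ofFn u))).toReal)

/-- `s(Ω,μ) = (q-1)² Σ_{k≥1} H_m^μ(α_k)/q^{k+1}`. -/
def sOm (m : ℕ) (q : ℕ+) (μ : Measure (ℕ+ → Fin m)) : ℝ :=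
  ((q : ℝ) - 1) ^ 2 * ∑' k : ℕ, Hent m μ (k + 1) / (q : ℝ) ^ (k + 2)

/-- cylinder determined by the first `n` entries of `x`, i.e. `[x₁…x_n]`. -/
def CylN {m : ℕ} (n : ℕ) (x : ℕ+ → Fin m) : Set (ℕ+ → Fin m) :=
  {y | ∀ k : ℕ+, (k : ℕ) ≤ n → y k = x k}

/-- the cylinder `[u|J_i]` where `u = x₁…x_n`: sequences `y` with
`y_{ℓ+1} = x_{q^ℓ i}` for all `ℓ ≥ 0` with `q^ℓ i ≤ n`. -/
def CylJ {m : ℕ} (q n i : ℕ+) (x : ℕ+ → Fin m) : Set (ℕ+ → Fin m) :=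
  {y | ∀ ℓ : ℕ, q ^ ℓ * i ≤ n → y ⟨ℓ + 1, Nat.succ_pos _⟩ = x (q ^ ℓ * i)}

/-- `P` has the product structure `P[u] = ∏_{i ≤ |u|, q ∤ i} μ[u|J_i]` on cylinders. -/
def ProdProp {m : ℕ} (q : ℕ+) (μ P : Measure (ℕ+ → Fin m)) : Prop :=
  ∀ (n : ℕ+) (x : ℕ+ → Fin m),
    P (CylN (n : ℕ) x) = ∏ i ∈ (Finset.Icc 1 n).filter (fun i => ¬ q ∣ i), μ (CylJ q n i x)

/-- `t` is a `[1, m^{1/(q-1)}]`-valued solution of `t(u)^q = Σ_{j : uj ∈ Pref(Ω)} t(uj)`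
on the tree of prefixes of `Ω`. -/
def TSol {m : ℕ} (q : ℕ+) (Ω : Set (ℕ+ → Fin m)) (t : List (Fin m) → ℝ) : Prop :=
  ∀ u ∈ Pref Ω,
    t u ∈ Set.Icc 1 ((m : ℝ) ^ ((1 : ℝ) / ((q : ℝ) - 1))) ∧
    t u ^ (q : ℕ) =
      ∑ j ∈ Finset.univ.filter (fun j : Fin m => u ++ [j] ∈ Pref Ω), t (u ++ [j])

/-- `μ` has the cylinder values `μ[u₁…u_k] = ∏_{j=1}^k t(u₁…u_j)/t(u₁…u_{j-1})^q`
for prefixes `u` of `Ω`. -/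
def CylVals {m : ℕ} (q : ℕ+) (Ω : Set (ℕ+ → Fin m)) (t : List (Fin m) → ℝ)
    (μ : Measure (ℕ+ → Fin m)) : Prop :=
  ∀ u ∈ Pref Ω,
    μ (Cyl u) =
      ENNReal.ofReal (∏ j ∈ Finset.range u.length, t (u.take (j + 1)) / t (u.take j) ^ (q : ℕ))

/-!
Every positive integer is uniquely `q ^ ℓ * i` with `q ∤ i`, so `x ↦ (x|J_i)_{q ∤ i}` is a
bijection from `Σ_m` onto the countable product `∏_{q ∤ i} Σ_m`, with inverse `interleave`.
`P_μ` is the image of the product measure `μ^⊗` under `interleave`: the preimage of `[u]` is the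
product of the cylinders `[u|J_i]`, `i ≤ |u|`, which gives the product formula, and the preimage
of `X_Ω` contains `Ω^⊗`, which has full measure. Uniqueness holds because the cylinders form a
π-system generating the product σ-algebra; that they generate it uses a countable dense set of
sequences to write each `{y | y k = a}` as a countable union of cylinders.
-/

namespace MultiplicativeShift

open Set

variable {m : ℕ}

theorem cylN_eq_pi (n : ℕ) (x : ℕ+ → Fin m) :
    CylN n x = Set.pi {k : ℕ+ | (k : ℕ) ≤ n} fun k => {x k} := by
  ext y
  simp [CylN]

theorem finite_setOf_coe_le (n : ℕ) : {k : ℕ+ | (k : ℕ) ≤ n}.Finite :=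
  (Set.finite_le_nat n).preimage PNat.coe_injective.injOn

theorem measurableSet_cylN (n : ℕ) (x : ℕ+ → Fin m) : MeasurableSet (CylN n x) := by
  rw [cylN_eq_pi]
  exact .pi (finite_setOf_coe_le n).countable fun _ _ => measurableSet_singleton _

theorem isOpen_cylN (n : ℕ) (x : ℕ+ → Fin m) : IsOpen (CylN n x) := by
  rw [cylN_eq_pi]
  exact isOpen_set_pi (finite_setOf_coe_le n) fun _ _ => isOpen_discrete _

theorem mem_cylN_self (n : ℕ) (x : ℕ+ → Fin m) : x ∈ CylN n x := fun _ _ => rfl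

theorem cylN_eq_of_mem {n : ℕ} {x y : ℕ+ → Fin m} (h : y ∈ CylN n x) : CylN n y = CylN n x := by
  ext z
  exact forall₂_congr fun k hk => by rw [h k hk]

theorem cylN_inter_self {n n' : ℕ} (x : ℕ+ → Fin m) :
    CylN n x ∩ CylN n' x = CylN (max n n') x := by
  ext y
  simp only [CylN, mem_inter_iff, mem_ofPred_eq]
  exact ⟨fun h k hk => (le_max_iff.1 hk).elim (h.1 k) (h.2 k),
    fun h => ⟨fun k hk => h k (le_max_of_le_left hk), fun k hk => h k (le_max_of_le_right hk)⟩⟩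

variable (m) in
def cylinders : Set (Set (ℕ+ → Fin m)) := {s | ∃ (n : ℕ+) (x : ℕ+ → Fin m), CylN n x = s}

theorem isPiSystem_cylinders : IsPiSystem (cylinders m) := by
  rintro _ ⟨n, x, rfl⟩ _ ⟨n', x', rfl⟩ ⟨z, hz, hz'⟩
  refine ⟨max n n', z, ?_⟩
  rw [← cylN_eq_of_mem hz, ← cylN_eq_of_mem hz', cylN_inter_self]
  exact congrArg (CylN · z) (Monotone.map_max fun _ _ => (PNat.coe_le_coe _ _).2)

theorem generateFrom_cylinders :
    MeasurableSpace.generateFrom (cylinders m) = MeasurableSpace.pi := by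
  refine le_antisymm (MeasurableSpace.generateFrom_le ?_) ?_
  · rintro _ ⟨n, x, rfl⟩
    exact measurableSet_cylN n x
  obtain ⟨D, hDc, hD⟩ := TopologicalSpace.exists_countable_dense (ℕ+ → Fin m)
  have hcoord : ∀ (k : ℕ+) (a : Fin m),
      (fun y : ℕ+ → Fin m => y k) ⁻¹' {a} = ⋃ x ∈ D ∩ {x | x k = a}, CylN k x := by
    intro k a
    ext y
    simp only [mem_preimage, mem_singleton_iff, mem_ofPred_eq, mem_iUnion, mem_inter_iff,
      exists_prop]
    constructor
    · rintro rfl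
      obtain ⟨x, hxD, hx⟩ := hD.exists_mem_open (isOpen_cylN k y) ⟨y, mem_cylN_self _ _⟩
      refine ⟨x, ⟨hxD, (hx k le_rfl).symm ▸ rfl⟩, ?_⟩
      rw [cylN_eq_of_mem hx]
      exact mem_cylN_self _ _
    · rintro ⟨x, ⟨-, rfl⟩, hy⟩
      exact hy k le_rfl
  refine iSup_le fun k => Measurable.comap_le ?_
  refine @measurable_to_countable' _ _ _ _ (MeasurableSpace.generateFrom (cylinders m)) _ fun a => ?_
  rw [hcoord]
  exact .biUnion (hDc.mono inter_subset_left) fun x _ =>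
    MeasurableSpace.measurableSet_generateFrom ⟨k, x, rfl⟩

theorem ext_of_cylN {P P' : Measure (ℕ+ → Fin m)} [IsFiniteMeasure P]
    (huniv : P univ = P' univ) (h : ∀ (n : ℕ+) (x : ℕ+ → Fin m), P (CylN n x) = P' (CylN n x)) : P = P' :=
  ext_of_generate_finite _ generateFrom_cylinders.symm isPiSystem_cylinders
    (by rintro _ ⟨n, x, rfl⟩; exact h n x) huniv

theorem _root_.ProdProp.unique {q : ℕ+} {μ P P' : Measure (ℕ+ → Fin m)}
    [IsProbabilityMeasure P] [IsProbabilityMeasure P'] (hP : ProdProp q μ P) (hP' : ProdProp q μ P') : P = P' :=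
  ext_of_cylN (by simp) fun n x => (hP n x).trans (hP' n x).symm

theorem measurableSet_cylJ (q n i : ℕ+) (x : ℕ+ → Fin m) : MeasurableSet (CylJ q n i x) := by
  unfold CylJ
  measurability

variable {q : ℕ+}

theorem pow_mul_injective :
    Function.Injective fun p : {i : ℕ+ // ¬ q ∣ i} × ℕ => q ^ p.2 * (p.1 : ℕ+) := by
  rintro ⟨⟨i, hi⟩, ℓ⟩ ⟨⟨j, hj⟩, ℓ'⟩ h
  have h' : (q : ℕ) ^ ℓ * i = (q : ℕ) ^ ℓ' * j := by simpa using congrArg PNat.val h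
  have := (Nat.maxPowDvdDiv_of_pow_mul_eq (by positivity) h' (PNat.dvd_iff.not.1 hi)).symm.trans
    (Nat.maxPowDvdDiv_of_pow_mul_eq (by positivity) rfl (PNat.dvd_iff.not.1 hj))
  simp only [Prod.mk.injEq] at this
  exact Prod.ext (Subtype.ext (PNat.coe_inj.1 this.2)) this.1

theorem pow_mul_surjective (hq : 2 ≤ (q : ℕ)) :
    Function.Surjective fun p : {i : ℕ+ // ¬ q ∣ i} × ℕ => q ^ p.2 * (p.1 : ℕ+) := by
  intro k
  obtain ⟨e, i, hi, hk⟩ := Nat.exists_eq_pow_mul_and_not_dvd k.ne_zero q (by omega)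
  have hi0 : 0 < i := Nat.pos_of_ne_zero (by rintro rfl; simp at hk)
  exact ⟨(⟨⟨i, hi0⟩, PNat.dvd_iff.not.2 hi⟩, e), PNat.eq hk.symm⟩

def powMulEquiv (hq : 2 ≤ (q : ℕ)) : {i : ℕ+ // ¬ q ∣ i} × ℕ ≃ ℕ+ :=
  Equiv.ofBijective _ ⟨pow_mul_injective, pow_mul_surjective hq⟩

theorem powMulEquiv_apply (hq : 2 ≤ (q : ℕ)) (p : {i : ℕ+ // ¬ q ∣ i} × ℕ) :
    powMulEquiv hq p = q ^ p.2 * (p.1 : ℕ+) := rfl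

def interleave (hq : 2 ≤ (q : ℕ)) (y : {i : ℕ+ // ¬ q ∣ i} → ℕ+ → Fin m) : ℕ+ → Fin m :=
  fun k => y ((powMulEquiv hq).symm k).1 ((powMulEquiv hq).symm k).2.succPNat

theorem interleave_pow_mul (hq : 2 ≤ (q : ℕ)) (y : {i : ℕ+ // ¬ q ∣ i} → ℕ+ → Fin m)
    (i : {i : ℕ+ // ¬ q ∣ i}) (ℓ : ℕ) : interleave hq y (q ^ ℓ * i) = y i ℓ.succPNat := by
  have : (powMulEquiv hq).symm (q ^ ℓ * i) = (i, ℓ) := (powMulEquiv hq).symm_apply_eq.2 rfl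
  simp [interleave, this]

theorem restrJ_interleave (hq : 2 ≤ (q : ℕ)) (y : {i : ℕ+ // ¬ q ∣ i} → ℕ+ → Fin m)
    (i : {i : ℕ+ // ¬ q ∣ i}) : RestrJ q (interleave hq y) i = y i := by
  funext k
  rw [RestrJ, interleave_pow_mul]
  exact congrArg (y i) k.succPNat_natPred

theorem measurable_interleave (hq : 2 ≤ (q : ℕ)) : Measurable (interleave (m := m) hq) :=
  measurable_pi_lambda _ fun _ => (measurable_pi_apply _).comp (measurable_pi_apply _)

theorem interleave_preimage_cylN (hq : 2 ≤ (q : ℕ)) (n : ℕ+) (x : ℕ+ → Fin m) :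
    interleave hq ⁻¹' CylN n x =
      ((Finset.Icc 1 n).subtype (¬ q ∣ ·) : Set {i : ℕ+ // ¬ q ∣ i}).pi
        fun i => CylJ q n i x := by
  ext y
  simp only [mem_preimage, CylN, mem_ofPred_eq, Set.mem_pi, Finset.mem_coe, Finset.mem_subtype,
    Finset.mem_Icc, CylJ]
  rw [(powMulEquiv hq).symm.forall_congr_left]
  simp only [Equiv.symm_symm, powMulEquiv_apply, interleave_pow_mul, Prod.forall, PNat.coe_le_coe]
  exact ⟨fun h i _ ℓ hℓ => h i ℓ hℓ,
    fun h i ℓ hℓ => h i ⟨one_le, le_trans (le_mul_of_one_le_left' one_le) hℓ⟩ ℓ hℓ⟩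

variable (hq : 2 ≤ (q : ℕ)) (μ : Measure (ℕ+ → Fin m)) [IsProbabilityMeasure μ]

def interleavedMeasure : Measure (ℕ+ → Fin m) :=
  (Measure.infinitePi fun _ : {i : ℕ+ // ¬ q ∣ i} => μ).map (interleave hq)

instance : IsProbabilityMeasure (interleavedMeasure hq μ) :=
  Measure.isProbabilityMeasure_map (measurable_interleave hq).aemeasurable

theorem prodProp_interleavedMeasure : ProdProp q μ (interleavedMeasure hq μ) := by
  intro n x
  rw [interleavedMeasure, Measure.map_apply (measurable_interleave hq) (measurableSet_cylN _ _),
    interleave_preimage_cylN, Measure.infinitePi_pi _ fun i _ => measurableSet_cylJ _ _ _ _,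
    Finset.prod_subtype_eq_prod_filter fun i => μ (CylJ q n i x)]

theorem interleavedMeasure_xOm {Ω : Set (ℕ+ → Fin m)} (hΩ : MeasurableSet Ω) (hμΩ : μ Ω = 1) :
    interleavedMeasure hq μ (XOm q Ω) = 1 := by
  refine le_antisymm prob_le_one ?_
  calc 1 = Measure.infinitePi (fun _ : {i : ℕ+ // ¬ q ∣ i} => μ) (univ.pi fun _ => Ω) := by
        rw [Measure.infinitePi_pi_univ _ fun _ => hΩ, hμΩ, tprod_one]
    _ ≤ Measure.infinitePi (fun _ => μ) (interleave hq ⁻¹' XOm q Ω) :=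
        measure_mono fun y hy i hi => restrJ_interleave hq y ⟨i, hi⟩ ▸ hy _ trivial
    _ ≤ interleavedMeasure hq μ (XOm q Ω) :=
        Measure.le_map_apply (measurable_interleave hq).aemeasurable _

end MultiplicativeShift

theorem stmt10_general (m : ℕ) (q : ℕ+) (hq : 2 ≤ (q : ℕ))
    (Ω : Set (ℕ+ → Fin m)) (hcl : IsClosed Ω)
    (μ : Measure (ℕ+ → Fin m)) [IsProbabilityMeasure μ] (hμΩ : μ Ω = 1) :
    ∃ P : Measure (ℕ+ → Fin m),
      IsProbabilityMeasure P ∧ ProdProp q μ P ∧ P (XOm q Ω) = 1 ∧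
      ∀ P' : Measure (ℕ+ → Fin m), IsProbabilityMeasure P' → ProdProp q μ P' → P' = P :=
  ⟨MultiplicativeShift.interleavedMeasure hq μ, inferInstance,
    MultiplicativeShift.prodProp_interleavedMeasure hq μ,
    MultiplicativeShift.interleavedMeasure_xOm hq μ hcl.measurableSet hμΩ,
    fun _ _ hP' => hP'.unique (MultiplicativeShift.prodProp_interleavedMeasure hq μ)⟩

/-- **Construction (2.4).** There is a unique Borel probability measure `P_μ` with
`P_μ[u] = ∏_{i ≤ |u|, q ∤ i} μ[u|J_i]` on cylinders, and it is supported on `X_Ω`. -/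
theorem stmt10 (m : ℕ) (hm : 2 ≤ m) (q : ℕ+) (hq : 2 ≤ (q : ℕ))
    (Ω : Set (ℕ+ → Fin m)) (hne : Ω.Nonempty) (hcl : IsClosed Ω)
    (μ : Measure (ℕ+ → Fin m)) [IsProbabilityMeasure μ] (hμΩ : μ Ω = 1) :
    ∃ P : Measure (ℕ+ → Fin m),
      IsProbabilityMeasure P ∧ ProdProp q μ P ∧ P (XOm q Ω) = 1 ∧
      ∀ P' : Measure (ℕ+ → Fin m), IsProbabilityMeasure P' → ProdProp q μ P' → P' = P :=
  stmt10_general m q hq Ω hcl μ hμΩ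
end
end

section
/- Let m ≥ 2, let q ≥ 2 be an integer, and let Ω be a nonempty closed subset of Σ_m. Let t be the unique [1, m^{1/(q-1)}]-valued solution of t(u)^q = Σ_{j : uj ∈ Pref(Ω)} t(uj) on the tree of prefixes of Ω. Then there is a unique Borel probability measure μ on Ω whose cylinder values are μ[u₁…u_k] = ∏_{j=1}^k t(u₁…u_j) / t(u₁…u_{j-1})^q for every u ∈ Pref_k(Ω) and every k ≥ 1, and this μ is the unique measure attaining max{s(Ω,ν) : ν a Borel probability measure on Ω}. -/
open scoped Classical ENNReal
open Filter MeasureTheory Topology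

noncomputable section

/-!
The equation for `t` says exactly that the numbers `t(uj) / t(u)^q`, `uj ∈ Pref(Ω)`, are
transition probabilities out of every prefix `u`, so the prescribed cylinder values form a
consistent family. The measure is the image of Lebesgue measure on `[0,1)` under the map that
reads off the nested intervals of lengths `μ[u]` containing a point; it is unique because the
prefix cylinders form a π-system generating the product σ-algebra.

For maximality let `H_k` be the (natural-log) entropy of `ν` on words of length `k`, `L_k` the
`ν`-average of `log t` over them, and `G_k ≥ 0` the conditional relative entropy of `ν` with
respect to the transition probabilities between levels `k` and `k+1`. Expanding the logarithm of
`t(uj) / t(u)^q` gives `G_k = (q L_k - L_{k+1}) - (H_{k+1} - H_k)`, and summing with weights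
`q^{-(k+1)}` telescopes to `s(Ω,ν) = (q-1) (log t(∅) - ∑ G_k q^{-(k+1)}) / log m`. Hence
`s(Ω,ν) ≤ (q-1) log t(∅) / log m`, with equality exactly when every `G_k` vanishes, i.e. when
`ν` has the cylinder values of `μ`.
-/

namespace PrefixTree

open Real InformationTheory

variable {m : ℕ} {q : ℕ+} {Ω : Set (ℕ+ → Fin m)} {t : List (Fin m) → ℝ}
  {ν : Measure (ℕ+ → Fin m)}

section Cylinders

lemma begins_nil (x : ℕ+ → Fin m) : Begins x [] := fun j => j.elim0

lemma cyl_nil : Cyl ([] : List (Fin m)) = Set.univ :=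
  Set.eq_univ_of_forall begins_nil

lemma begins_ofFn_iff {k : ℕ} (x : ℕ+ → Fin m) (u : Fin k → Fin m) :
    Begins x (List.ofFn u) ↔ ∀ i : Fin k, x ⟨(i : ℕ) + 1, Nat.succ_pos _⟩ = u i := by
  constructor
  · intro h i
    simpa using h (Fin.cast List.length_ofFn.symm i)
  · intro h j
    simpa [Fin.cast] using h (Fin.cast List.length_ofFn j)

lemma begins_ofFn_self (k : ℕ) (x : ℕ+ → Fin m) :
    Begins x (List.ofFn fun i : Fin k => x ⟨(i : ℕ) + 1, Nat.succ_pos _⟩) :=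
  (begins_ofFn_iff x _).2 fun _ => rfl

lemma eq_of_begins_ofFn {k : ℕ} {x : ℕ+ → Fin m} {u : Fin k → Fin m}
    (h : Begins x (List.ofFn u)) : u = fun i : Fin k => x ⟨(i : ℕ) + 1, Nat.succ_pos _⟩ :=
  funext fun i => ((begins_ofFn_iff x u).1 h i).symm

lemma Begins.of_append {x : ℕ+ → Fin m} {u v : List (Fin m)} (h : Begins x (u ++ v)) :
    Begins x u := fun j => by
  simpa [List.getElem_append_left j.isLt] using h ⟨j, by simp; omega⟩

lemma ofFn_snoc {k : ℕ} (u : Fin k → Fin m) (j : Fin m) :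
    List.ofFn (Fin.snoc u j : Fin (k + 1) → Fin m) = List.ofFn u ++ [j] := by
  rw [List.ofFn_succ']
  simp [Fin.snoc_castSucc, Fin.snoc_last, List.concat_eq_append]

lemma measurableSet_cyl (u : List (Fin m)) : MeasurableSet (Cyl u) := by
  have : Cyl u = ⋂ j : Fin u.length, (fun x : ℕ+ → Fin m => x ⟨(j : ℕ) + 1, Nat.succ_pos _⟩) ⁻¹'
      {u.get j} := by
    ext x; simp [Cyl, Begins]
  rw [this]
  exact .iInter fun j => measurable_pi_apply _ (measurableSet_singleton _)

lemma disjoint_cyl_ofFn {k : ℕ} {u v : Fin k → Fin m} (h : u ≠ v) :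
    Disjoint (Cyl (List.ofFn u)) (Cyl (List.ofFn v)) :=
  Set.disjoint_left.2 fun _ hu hv =>
    h ((eq_of_begins_ofFn hu).trans (eq_of_begins_ofFn hv).symm)

lemma cyl_ofFn_eq_iUnion_snoc {k : ℕ} (u : Fin k → Fin m) :
    Cyl (List.ofFn u) = ⋃ j : Fin m, Cyl (List.ofFn (Fin.snoc u j : Fin (k + 1) → Fin m)) := by
  ext x
  simp only [Set.mem_iUnion, ofFn_snoc]
  refine ⟨fun h => ⟨x ⟨k + 1, Nat.succ_pos _⟩, ?_⟩, fun ⟨j, h⟩ => Begins.of_append h⟩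
  change Begins x _
  rw [← ofFn_snoc, begins_ofFn_iff]
  refine Fin.lastCases (by simp) fun i => ?_
  simpa using (begins_ofFn_iff x u).1 h i

lemma cyl_subset_cyl_of_begins {u v : List (Fin m)} {x : ℕ+ → Fin m} (hu : Begins x u)
    (hv : Begins x v) (hlen : u.length ≤ v.length) : Cyl v ⊆ Cyl u := fun y hy j => by
  have hj : (j : ℕ) < v.length := j.isLt.trans_le hlen
  rw [hy ⟨j, hj⟩, ← hv ⟨j, hj⟩, hu j]

lemma Pref.of_append {u v : List (Fin m)} (h : u ++ v ∈ Pref Ω) : u ∈ Pref Ω :=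
  let ⟨x, hx, hb⟩ := h; ⟨x, hx, Begins.of_append hb⟩

lemma Pref.take {u : List (Fin m)} (hu : u ∈ Pref Ω) (i : ℕ) : u.take i ∈ Pref Ω :=
  Pref.of_append (v := u.drop i) (by rwa [List.take_append_drop])

lemma nil_mem_pref (hne : Ω.Nonempty) : [] ∈ Pref Ω :=
  let ⟨x, hx⟩ := hne; ⟨x, hx, begins_nil x⟩

lemma mem_of_forall_mem_pref (hcl : IsClosed Ω) {x : ℕ+ → Fin m}
    (h : ∀ k, List.ofFn (fun i : Fin k => x ⟨(i : ℕ) + 1, Nat.succ_pos _⟩) ∈ Pref Ω) :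
    x ∈ Ω := by
  choose y hyΩ hy using h
  have hlim : Tendsto y atTop (𝓝 x) := tendsto_pi_nhds.2 fun j => by
    refine tendsto_const_nhds.congr' ?_
    filter_upwards [eventually_ge_atTop (j : ℕ)] with k hk
    have hj : (⟨(j : ℕ) - 1 + 1, Nat.succ_pos _⟩ : ℕ+) = j := PNat.eq (Nat.sub_add_cancel j.pos)
    have := (begins_ofFn_iff _ _).1 (hy k) ⟨(j : ℕ) - 1, by have := j.pos; omega⟩
    rw [hj] at this
    exact this.symm
  exact hcl.mem_of_tendsto hlim (.of_forall hyΩ)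

lemma cyl_subset_compl {u : List (Fin m)} (hu : u ∉ Pref Ω) : Cyl u ⊆ Ωᶜ :=
  fun x hx hxΩ => hu ⟨x, hxΩ, hx⟩

lemma measure_compl_eq_zero_of_cyl (hcl : IsClosed Ω) {μ : Measure (ℕ+ → Fin m)}
    (h : ∀ u ∉ Pref Ω, μ (Cyl u) = 0) : μ Ωᶜ = 0 := by
  refine measure_mono_null (fun x hx => ?_) (measure_iUnion_null fun u =>
    measure_iUnion_null fun (hu : u ∉ Pref Ω) => h u hu)
  by_contra hmem
  simp only [Set.mem_iUnion, not_exists] at hmem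
  exact hx (mem_of_forall_mem_pref hcl fun k =>
    not_not.1 fun hk => hmem _ hk (begins_ofFn_self k x))

end Cylinders

section Weights

variable (q Ω t)

def transProb (u : List (Fin m)) (j : Fin m) : ℝ :=
  if u ++ [j] ∈ Pref Ω then t (u ++ [j]) / t u ^ (q : ℕ) else 0

def cylWeight (u : List (Fin m)) : ℝ :=
  if u ∈ Pref Ω then
    ∏ j ∈ Finset.range u.length, t (u.take (j + 1)) / t (u.take j) ^ (q : ℕ)
  else 0

variable {q Ω t}

lemma TSol.pos (ht : TSol q Ω t) {u : List (Fin m)} (hu : u ∈ Pref Ω) : 0 < t u :=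
  one_pos.trans_le (ht u hu).1.1

lemma cylWeight_nil (hne : Ω.Nonempty) : cylWeight q Ω t [] = 1 := by
  simp [cylWeight, nil_mem_pref hne]

lemma cylWeight_append_singleton (u : List (Fin m)) (j : Fin m) :
    cylWeight q Ω t (u ++ [j]) = cylWeight q Ω t u * transProb q Ω t u j := by
  by_cases hj : u ++ [j] ∈ Pref Ω
  · rw [cylWeight, if_pos hj, cylWeight, if_pos (Pref.of_append hj), transProb, if_pos hj,
      List.length_append, List.length_singleton, Finset.prod_range_succ]
    congr 1
    · refine Finset.prod_congr rfl fun i hi => ?_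
      have hi : i < u.length := Finset.mem_range.1 hi
      rw [List.take_append_of_le_length (by omega), List.take_append_of_le_length hi.le]
    · rw [List.take_append_of_le_length le_rfl, List.take_length, List.take_of_length_le (by simp)]
  · rw [cylWeight, if_neg hj, transProb, if_neg hj, mul_zero]

variable (ht : TSol q Ω t)
include ht

lemma transProb_nonneg (u : List (Fin m)) (j : Fin m) : 0 ≤ transProb q Ω t u j := by
  unfold transProb
  split_ifs with h
  · exact div_nonneg (TSol.pos ht h).le (pow_nonneg (TSol.pos ht (Pref.of_append h)).le _)
  · exact le_rfl

lemma sum_transProb {u : List (Fin m)} (hu : u ∈ Pref Ω) : ∑ j, transProb q Ω t u j = 1 := by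
  have htu : t u ^ (q : ℕ) ≠ 0 := pow_ne_zero _ (TSol.pos ht hu).ne'
  simp only [transProb]
  rw [← Finset.sum_filter, ← Finset.sum_div, ← (ht u hu).2, div_self htu]

lemma cylWeight_nonneg (u : List (Fin m)) : 0 ≤ cylWeight q Ω t u := by
  unfold cylWeight
  split_ifs with h
  · exact Finset.prod_nonneg fun j _ =>
      div_nonneg (TSol.pos ht (Pref.take h _)).le (pow_nonneg (TSol.pos ht (Pref.take h _)).le _)
  · exact le_rfl

lemma sum_cylWeight_append (u : List (Fin m)) :
    ∑ j, cylWeight q Ω t (u ++ [j]) = cylWeight q Ω t u := by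
  simp only [cylWeight_append_singleton, ← Finset.mul_sum]
  by_cases hu : u ∈ Pref Ω
  · rw [sum_transProb ht hu, mul_one]
  · rw [cylWeight, if_neg hu, zero_mul]

end Weights

section Coding

variable (q Ω t)

def childOffset (u : List (Fin m)) (n : ℕ) : ℝ :=
  ∑ j ∈ Finset.univ.filter (fun j : Fin m => (j : ℕ) < n), cylWeight q Ω t (u ++ [j])

/-- A word `u` is coded by the interval `[leftEnd u, leftEnd u + cylWeight u)`, which the
intervals of its children `u j` tile from left to right in the order of `j`. -/
def leftEnd : {k : ℕ} → (Fin k → Fin m) → ℝ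
  | 0, _ => 0
  | _ + 1, u => leftEnd (Fin.init u) + childOffset q Ω t (List.ofFn (Fin.init u)) (u (Fin.last _))

def interval {k : ℕ} (u : Fin k → Fin m) : Set ℝ :=
  Set.Ico (leftEnd q Ω t u) (leftEnd q Ω t u + cylWeight q Ω t (List.ofFn u))

def digit [NeZero m] {k : ℕ} (u : Fin k → Fin m) (r : ℝ) : Fin m :=
  ⟨Nat.findGreatest (fun n => leftEnd q Ω t u + childOffset q Ω t (List.ofFn u) n ≤ r) (m - 1),
    (Nat.findGreatest_le _).trans_lt (Nat.sub_lt (NeZero.pos m) one_pos)⟩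

def codeWord [NeZero m] : (k : ℕ) → ℝ → Fin k → Fin m
  | 0, _ => Fin.elim0
  | k + 1, r => Fin.snoc (codeWord k r) (digit q Ω t (codeWord k r) r)

def coding [NeZero m] (r : ℝ) : ℕ+ → Fin m :=
  fun k => codeWord q Ω t k r ⟨(k : ℕ) - 1, Nat.sub_lt k.pos one_pos⟩

def treeMeasure [NeZero m] : Measure (ℕ+ → Fin m) :=
  (volume.restrict (Set.Ico (0 : ℝ) 1)).map (coding q Ω t)

variable {q Ω t}

lemma leftEnd_snoc {k : ℕ} (u : Fin k → Fin m) (j : Fin m) :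
    leftEnd q Ω t (Fin.snoc u j : Fin (k + 1) → Fin m) =
      leftEnd q Ω t u + childOffset q Ω t (List.ofFn u) j := by
  simp [leftEnd, Fin.init_snoc, Fin.snoc_last]

lemma childOffset_zero (u : List (Fin m)) : childOffset q Ω t u 0 = 0 := by
  simp [childOffset]

lemma childOffset_succ (u : List (Fin m)) (j : Fin m) :
    childOffset q Ω t u ((j : ℕ) + 1) = childOffset q Ω t u j + cylWeight q Ω t (u ++ [j]) := by
  have : Finset.univ.filter (fun i : Fin m => (i : ℕ) < j + 1) =
      insert j (Finset.univ.filter fun i : Fin m => (i : ℕ) < j) := by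
    ext i
    simp only [Finset.mem_filter, Finset.mem_univ, true_and, Finset.mem_insert, Fin.ext_iff]
    omega
  rw [childOffset, childOffset, this, Finset.sum_insert (by simp), add_comm]

variable (ht : TSol q Ω t)
include ht

lemma childOffset_nonneg (u : List (Fin m)) (n : ℕ) : 0 ≤ childOffset q Ω t u n :=
  Finset.sum_nonneg fun _ _ => cylWeight_nonneg ht _

lemma childOffset_mono (u : List (Fin m)) {a b : ℕ} (hab : a ≤ b) :
    childOffset q Ω t u a ≤ childOffset q Ω t u b :=
  Finset.sum_le_sum_of_subset_of_nonneg
    (fun i hi => by simp only [Finset.mem_filter, Finset.mem_univ, true_and] at hi ⊢; omega)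
    fun _ _ _ => cylWeight_nonneg ht _

lemma childOffset_le (u : List (Fin m)) (n : ℕ) : childOffset q Ω t u n ≤ cylWeight q Ω t u := by
  rw [← sum_cylWeight_append ht u]
  exact Finset.sum_le_sum_of_subset_of_nonneg (Finset.subset_univ _)
    fun _ _ _ => cylWeight_nonneg ht _

lemma interval_snoc_subset {k : ℕ} (u : Fin k → Fin m) (j : Fin m) :
    interval q Ω t (Fin.snoc u j : Fin (k + 1) → Fin m) ⊆ interval q Ω t u := by
  refine Set.Ico_subset_Ico ?_ ?_ <;> rw [leftEnd_snoc]
  · linarith [childOffset_nonneg ht (List.ofFn u) j]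
  · rw [ofFn_snoc, add_assoc, ← childOffset_succ]
    linarith [childOffset_le ht (List.ofFn u) (j + 1)]

lemma disjoint_interval_snoc {k : ℕ} (u : Fin k → Fin m) {i j : Fin m} (hij : i < j) :
    Disjoint (interval q Ω t (Fin.snoc u i : Fin (k + 1) → Fin m))
      (interval q Ω t (Fin.snoc u j : Fin (k + 1) → Fin m)) := by
  refine Set.Ico_disjoint_Ico.2 (le_trans (min_le_left _ _) (le_trans ?_ (le_max_right _ _)))
  rw [leftEnd_snoc, leftEnd_snoc, ofFn_snoc, add_assoc, ← childOffset_succ]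
  linarith [childOffset_mono ht (List.ofFn u) (Nat.succ_le_of_lt hij)]

lemma disjoint_interval : ∀ {k : ℕ} {u v : Fin k → Fin m}, u ≠ v →
    Disjoint (interval q Ω t u) (interval q Ω t v)
  | 0, u, v, h => absurd (Subsingleton.elim u v) h
  | k + 1, u, v, h => by
    rw [← Fin.snoc_init_self u, ← Fin.snoc_init_self v]
    by_cases hinit : Fin.init u = Fin.init v
    · have hlast : u (Fin.last k) ≠ v (Fin.last k) := fun hl =>
        h (by rw [← Fin.snoc_init_self u, ← Fin.snoc_init_self v, hinit, hl])
      rw [hinit]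
      rcases lt_or_gt_of_ne hlast with hlt | hlt
      · exact disjoint_interval_snoc ht _ hlt
      · exact (disjoint_interval_snoc ht _ hlt).symm
    · exact (disjoint_interval hinit).mono (interval_snoc_subset ht _ _)
        (interval_snoc_subset ht _ _)

lemma interval_subset_Ico (hne : Ω.Nonempty) :
    ∀ {k : ℕ} (u : Fin k → Fin m), interval q Ω t u ⊆ Set.Ico 0 1
  | 0, u => by simp [interval, leftEnd, cylWeight_nil hne]
  | k + 1, u => by
    rw [← Fin.snoc_init_self u]
    exact (interval_snoc_subset ht _ _).trans (interval_subset_Ico hne _)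

lemma mem_interval_snoc_digit [NeZero m] {k : ℕ} {u : Fin k → Fin m} {r : ℝ}
    (hr : r ∈ interval q Ω t u) :
    r ∈ interval q Ω t (Fin.snoc u (digit q Ω t u r) : Fin (k + 1) → Fin m) := by
  set P : ℕ → Prop := fun n => leftEnd q Ω t u + childOffset q Ω t (List.ofFn u) n ≤ r
  have hd : (digit q Ω t u r : ℕ) = Nat.findGreatest P (m - 1) := rfl
  rw [interval, leftEnd_snoc, ofFn_snoc, add_assoc, ← childOffset_succ, hd]
  refine ⟨Nat.findGreatest_spec (P := P) (Nat.zero_le _)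
    (by simpa [P, childOffset_zero] using hr.1), ?_⟩
  by_cases hlt : Nat.findGreatest P (m - 1) < m - 1
  · exact not_le.1
      (Nat.findGreatest_is_greatest (P := P) (n := m - 1) (Nat.lt_succ_self _) (by omega))
  · have hm : Nat.findGreatest P (m - 1) + 1 = m := by
      have := Nat.findGreatest_le (P := P) (m - 1)
      have := NeZero.pos m
      omega
    rw [hm]
    have hfull : childOffset q Ω t (List.ofFn u) m = cylWeight q Ω t (List.ofFn u) := by
      rw [childOffset, Finset.filter_true_of_mem fun j _ => j.isLt, sum_cylWeight_append ht]
    rw [hfull]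
    exact hr.2

end Coding

section TreeMeasure

variable [NeZero m]

lemma codeWord_apply (r : ℝ) :
    ∀ (k : ℕ) (i : Fin k), codeWord q Ω t k r i = codeWord q Ω t (i + 1) r (Fin.last i)
  | 0, i => i.elim0
  | k + 1, i => by
    rw [codeWord]
    induction i using Fin.lastCases with
    | last => rw [Fin.snoc_last, Fin.val_last, codeWord, Fin.snoc_last]
    | cast i => rw [Fin.snoc_castSucc, codeWord_apply r k i, Fin.val_castSucc]

lemma begins_coding_iff {r : ℝ} {k : ℕ} {u : Fin k → Fin m} :
    Begins (coding q Ω t r) (List.ofFn u) ↔ codeWord q Ω t k r = u := by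
  rw [begins_ofFn_iff, funext_iff]
  refine forall_congr' fun i => ?_
  rw [codeWord_apply r k i]
  rfl

lemma measurable_digit {k : ℕ} (u : Fin k → Fin m) : Measurable (digit q Ω t u) := by
  have h : Measurable fun r => (digit q Ω t u r : ℕ) :=
    measurable_findGreatest fun _ _ => measurableSet_Ici
  exact measurable_to_countable' fun d => by
    simpa only [Set.preimage, Set.mem_singleton_iff, Fin.ext_iff] using
      h (measurableSet_singleton (d : ℕ))

lemma measurable_codeWord : ∀ k : ℕ, Measurable (codeWord q Ω t k)
  | 0 => measurable_const
  | k + 1 => by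
    have : Measurable fun p : (Fin k → Fin m) × ℝ =>
        (Fin.snoc p.1 (digit q Ω t p.1 p.2) : Fin (k + 1) → Fin m) :=
      measurable_from_prod_countable_right fun u =>
        (measurable_of_countable fun j => (Fin.snoc u j : Fin (k + 1) → Fin m)).comp
          (measurable_digit u)
    exact this.comp ((measurable_codeWord k).prodMk measurable_id)

lemma measurable_coding : Measurable (coding q Ω t) :=
  measurable_pi_lambda _ fun _ => (measurable_pi_apply _).comp (measurable_codeWord _)

variable (hne : Ω.Nonempty) (ht : TSol q Ω t)
include hne ht

lemma codeWord_mem_interval {r : ℝ} (hr : r ∈ Set.Ico (0 : ℝ) 1) :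
    ∀ k : ℕ, r ∈ interval q Ω t (codeWord q Ω t k r)
  | 0 => by simpa [interval, leftEnd, cylWeight_nil hne] using hr
  | k + 1 => mem_interval_snoc_digit ht (codeWord_mem_interval hr k)

lemma codeWord_eq_iff {r : ℝ} (hr : r ∈ Set.Ico (0 : ℝ) 1) {k : ℕ} {u : Fin k → Fin m} :
    codeWord q Ω t k r = u ↔ r ∈ interval q Ω t u := by
  refine ⟨fun h => h ▸ codeWord_mem_interval hne ht hr k, fun hu => ?_⟩
  by_contra h
  exact Set.disjoint_left.1 (disjoint_interval ht h) (codeWord_mem_interval hne ht hr k) hu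

lemma coding_preimage_cyl_inter_Ico {k : ℕ} (u : Fin k → Fin m) :
    coding q Ω t ⁻¹' Cyl (List.ofFn u) ∩ Set.Ico 0 1 = interval q Ω t u := by
  ext r
  refine ⟨fun ⟨hu, hr⟩ => (codeWord_eq_iff hne ht hr).1 (begins_coding_iff.1 hu), fun hu => ?_⟩
  have hr := interval_subset_Ico ht hne u hu
  exact ⟨begins_coding_iff.2 ((codeWord_eq_iff hne ht hr).2 hu), hr⟩

lemma treeMeasure_cyl (u : List (Fin m)) :
    treeMeasure q Ω t (Cyl u) = ENNReal.ofReal (cylWeight q Ω t u) := by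
  rw [← List.ofFn_get u, treeMeasure, Measure.map_apply measurable_coding (measurableSet_cyl _),
    Measure.restrict_apply (measurable_coding (measurableSet_cyl _)),
    coding_preimage_cyl_inter_Ico hne ht, interval, Real.volume_Ico, add_sub_cancel_left]

lemma isProbabilityMeasure_treeMeasure : IsProbabilityMeasure (treeMeasure q Ω t) :=
  ⟨by rw [← cyl_nil, treeMeasure_cyl hne ht, cylWeight_nil hne, ENNReal.ofReal_one]⟩

lemma cylVals_treeMeasure : CylVals q Ω t (treeMeasure q Ω t) := fun u hu => by
  rw [treeMeasure_cyl hne ht, cylWeight, if_pos hu]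

lemma treeMeasure_omega (hcl : IsClosed Ω) : treeMeasure q Ω t Ω = 1 := by
  have := isProbabilityMeasure_treeMeasure hne ht
  refine (prob_compl_eq_zero_iff hcl.measurableSet).1
    (measure_compl_eq_zero_of_cyl hcl fun u hu => ?_)
  rw [treeMeasure_cyl hne ht, cylWeight, if_neg hu, ENNReal.ofReal_zero]

end TreeMeasure

section Uniqueness

lemma isPiSystem_range_cyl : IsPiSystem (Set.range (Cyl (m := m))) := by
  rintro _ ⟨u, rfl⟩ _ ⟨v, rfl⟩ ⟨x, hu, hv⟩
  rcases le_total u.length v.length with h | h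
  · exact ⟨v, (Set.inter_eq_right.2 (cyl_subset_cyl_of_begins hu hv h)).symm⟩
  · exact ⟨u, (Set.inter_eq_left.2 (cyl_subset_cyl_of_begins hv hu h)).symm⟩

lemma eval_preimage_eq_iUnion_cyl (k : ℕ+) (A : Set (Fin m)) :
    (fun x : ℕ+ → Fin m => x k) ⁻¹' A =
      ⋃ (u : Fin k → Fin m) (_ : u ⟨(k : ℕ) - 1, Nat.sub_lt k.pos one_pos⟩ ∈ A),
        Cyl (List.ofFn u) := by
  have hk : (⟨(k : ℕ) - 1 + 1, Nat.succ_pos _⟩ : ℕ+) = k := PNat.eq (Nat.sub_add_cancel k.pos)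
  ext x
  simp only [Set.mem_preimage, Set.mem_iUnion, exists_prop]
  constructor
  · exact fun hx => ⟨_, by simpa only [hk] using hx, begins_ofFn_self k x⟩
  · rintro ⟨u, hA, hu⟩
    have := (begins_ofFn_iff x u).1 hu ⟨(k : ℕ) - 1, Nat.sub_lt k.pos one_pos⟩
    rw [hk] at this
    rwa [this]

lemma generateFrom_range_cyl :
    MeasurableSpace.generateFrom (Set.range (Cyl (m := m))) = MeasurableSpace.pi := by
  refine le_antisymm (MeasurableSpace.generateFrom_le ?_) ?_
  · rintro _ ⟨u, rfl⟩
    exact measurableSet_cyl u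
  · rw [MeasurableSpace.pi_eq_generateFrom_projections]
    refine MeasurableSpace.generateFrom_le ?_
    rintro _ ⟨k, A, -, rfl⟩
    rw [eval_preimage_eq_iUnion_cyl]
    exact .iUnion fun u => .iUnion fun _ => MeasurableSpace.measurableSet_generateFrom ⟨_, rfl⟩

lemma measure_cyl_eq_zero (hΩ : MeasurableSet Ω) {μ : Measure (ℕ+ → Fin m)}
    [IsProbabilityMeasure μ] (hμΩ : μ Ω = 1) {u : List (Fin m)} (hu : u ∉ Pref Ω) :
    μ (Cyl u) = 0 :=
  measure_mono_null (cyl_subset_compl hu) ((prob_compl_eq_zero_iff hΩ).2 hμΩ)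

lemma eq_of_cylVals (hΩ : MeasurableSet Ω) {μ ν : Measure (ℕ+ → Fin m)}
    [IsProbabilityMeasure μ] [IsProbabilityMeasure ν] (hμΩ : μ Ω = 1) (hνΩ : ν Ω = 1)
    (hμ : CylVals q Ω t μ) (hν : CylVals q Ω t ν) : μ = ν := by
  refine ext_of_generate_finite _ generateFrom_range_cyl.symm isPiSystem_range_cyl ?_
    (by rw [measure_univ, measure_univ])
  rintro _ ⟨u, rfl⟩
  by_cases hu : u ∈ Pref Ω
  · rw [hμ u hu, hν u hu]
  · rw [measure_cyl_eq_zero hΩ hμΩ hu, measure_cyl_eq_zero hΩ hνΩ hu]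

end Uniqueness

section Gibbs

lemma mul_log_div_eq_mul_klFun_add {p r : ℝ} (hpr : r = 0 → p = 0) :
    p * log (p / r) = r * klFun (p / r) + (p - r) := by
  rcases eq_or_ne r 0 with hr | hr
  · simp [hr, hpr hr]
  · rw [klFun_apply]
    field_simp
    ring

lemma sum_negMulLog_le_log_card {ι : Type*} [Fintype ι] {p : ι → ℝ} (hp : ∀ i, 0 ≤ p i)
    (hsum : ∑ i, p i = 1) : ∑ i, negMulLog (p i) ≤ log (Fintype.card ι) := by
  have hN : (0 : ℝ) < Fintype.card ι := by
    have : Nonempty ι := by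
      by_contra h
      simp [not_nonempty_iff.1 h] at hsum
    exact_mod_cast Fintype.card_pos
  have hJ := concaveOn_negMulLog.le_map_sum (t := Finset.univ)
    (w := fun _ => (Fintype.card ι : ℝ)⁻¹) (p := p) (fun _ _ => by positivity)
    (by simp [hN.ne']) fun i _ => hp i
  simp only [smul_eq_mul, ← Finset.mul_sum, hsum, mul_one, negMulLog, log_inv] at hJ
  rw [inv_mul_le_iff₀ hN] at hJ
  simpa [negMulLog, hN.ne'] using hJ

end Gibbs

section Levels

lemma sum_fun_succ {M : Type*} [AddCommMonoid M] {k : ℕ} (f : (Fin (k + 1) → Fin m) → M) :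
    ∑ v, f v = ∑ u : Fin k → Fin m, ∑ j, f (Fin.snoc u j) := by
  rw [← (Fin.snocEquiv fun _ => Fin m).sum_comp, Fintype.sum_prod_type_right]
  rfl

variable (q Ω t ν)

def cylMass {k : ℕ} (u : Fin k → Fin m) : ℝ := (ν (Cyl (List.ofFn u))).toReal

def levelEntropy (k : ℕ) : ℝ := ∑ u : Fin k → Fin m, negMulLog (cylMass ν u)

def levelPotential (k : ℕ) : ℝ := ∑ u : Fin k → Fin m, cylMass ν u * log (t (List.ofFn u))

def predictedMass {k : ℕ} (u : Fin k → Fin m) (j : Fin m) : ℝ :=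
  cylMass ν u * transProb q Ω t (List.ofFn u) j

/-- The conditional relative entropy of `ν` at level `k` with respect to `transProb`. The term
`r * klFun (p / r)` is `p * log (p / r) - p + r`, which is nonnegative term by term. -/
def levelGap (k : ℕ) : ℝ :=
  ∑ u : Fin k → Fin m, ∑ j, predictedMass q Ω t ν u j *
    klFun (cylMass ν (Fin.snoc u j : Fin (k + 1) → Fin m) / predictedMass q Ω t ν u j)

variable {q Ω t ν}

lemma cylMass_nonneg {k : ℕ} (u : Fin k → Fin m) : 0 ≤ cylMass ν u := ENNReal.toReal_nonneg

lemma cylMass_nil [IsProbabilityMeasure ν] (u : Fin 0 → Fin m) : cylMass ν u = 1 := by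
  simp [cylMass, cyl_nil]

lemma sum_cylMass_snoc [IsFiniteMeasure ν] {k : ℕ} (u : Fin k → Fin m) :
    ∑ j, cylMass ν (Fin.snoc u j : Fin (k + 1) → Fin m) = cylMass ν u := by
  have hdisj : Pairwise (Function.onFun Disjoint fun j =>
      Cyl (List.ofFn (Fin.snoc u j : Fin (k + 1) → Fin m))) := fun i j hij =>
    disjoint_cyl_ofFn fun h => hij (by simpa using congr_fun h (Fin.last k))
  rw [cylMass, cyl_ofFn_eq_iUnion_snoc, measure_iUnion hdisj fun _ => measurableSet_cyl _,
    tsum_fintype, ENNReal.toReal_sum fun _ _ => measure_ne_top _ _]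
  rfl

lemma sum_cylMass [IsProbabilityMeasure ν] : ∀ k : ℕ, ∑ u : Fin k → Fin m, cylMass ν u = 1
  | 0 => by simp [cylMass_nil]
  | k + 1 => by simp only [sum_fun_succ, sum_cylMass_snoc, sum_cylMass k]

lemma cylMass_le_one [IsProbabilityMeasure ν] {k : ℕ} (u : Fin k → Fin m) : cylMass ν u ≤ 1 :=
  ENNReal.toReal_le_of_le_ofReal zero_le_one (by simpa using prob_le_one)

lemma cylMass_eq_zero (hΩ : MeasurableSet Ω) [IsProbabilityMeasure ν] (hνΩ : ν Ω = 1) {k : ℕ}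
    {u : Fin k → Fin m} (hu : List.ofFn u ∉ Pref Ω) : cylMass ν u = 0 := by
  rw [cylMass, measure_cyl_eq_zero hΩ hνΩ hu, ENNReal.toReal_zero]

lemma hent_eq_levelEntropy_div (k : ℕ) : Hent m ν k = levelEntropy ν k / log m := by
  simp only [Hent, levelEntropy, negMulLog, logb, Finset.sum_div, ← Finset.sum_neg_distrib]
  refine Finset.sum_congr rfl fun u _ => ?_
  rw [cylMass]
  ring

lemma levelEntropy_zero [IsProbabilityMeasure ν] : levelEntropy ν 0 = 0 := by
  simp [levelEntropy, cylMass_nil]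

lemma levelEntropy_nonneg [IsProbabilityMeasure ν] (k : ℕ) : 0 ≤ levelEntropy ν k :=
  Finset.sum_nonneg fun u _ => negMulLog_nonneg (cylMass_nonneg u) (cylMass_le_one u)

lemma levelEntropy_le [IsProbabilityMeasure ν] (k : ℕ) : levelEntropy ν k ≤ k * log m := by
  have := sum_negMulLog_le_log_card (fun u : Fin k → Fin m => cylMass_nonneg (ν := ν) u)
    (sum_cylMass k)
  simpa [levelEntropy, Fintype.card_fun, Real.log_pow] using this

lemma levelPotential_zero [IsProbabilityMeasure ν] : levelPotential t ν 0 = log (t []) := by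
  simp [levelPotential, cylMass_nil]

variable (hΩ : MeasurableSet Ω) [IsProbabilityMeasure ν] (hνΩ : ν Ω = 1) (ht : TSol q Ω t)
include hΩ hνΩ ht

lemma levelPotential_nonneg (k : ℕ) : 0 ≤ levelPotential t ν k := by
  refine Finset.sum_nonneg fun u _ => ?_
  by_cases hu : List.ofFn u ∈ Pref Ω
  · exact mul_nonneg (cylMass_nonneg u) (log_nonneg (ht _ hu).1.1)
  · rw [cylMass_eq_zero hΩ hνΩ hu, zero_mul]

lemma levelPotential_le (hm : 2 ≤ m) (k : ℕ) :
    levelPotential t ν k ≤ log m / ((q : ℝ) - 1) := by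
  have hlog : ∀ u : Fin k → Fin m, cylMass ν u * log (t (List.ofFn u)) ≤
      cylMass ν u * (log m / ((q : ℝ) - 1)) := fun u => by
    by_cases hu : List.ofFn u ∈ Pref Ω
    · refine mul_le_mul_of_nonneg_left ?_ (cylMass_nonneg u)
      calc log (t (List.ofFn u)) ≤ log ((m : ℝ) ^ ((1 : ℝ) / ((q : ℝ) - 1))) :=
            log_le_log (TSol.pos ht hu) (ht _ hu).1.2
        _ = log m / ((q : ℝ) - 1) := by rw [log_rpow (by positivity)]; ring
    · rw [cylMass_eq_zero hΩ hνΩ hu, zero_mul, zero_mul]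
  calc levelPotential t ν k ≤ ∑ u : Fin k → Fin m, cylMass ν u * (log m / ((q : ℝ) - 1)) :=
        Finset.sum_le_sum fun u _ => hlog u
    _ = log m / ((q : ℝ) - 1) := by rw [← Finset.sum_mul, sum_cylMass, one_mul]

end Levels

section Gap

lemma predictedMass_nonneg (ht : TSol q Ω t) {k : ℕ} (u : Fin k → Fin m) (j : Fin m) :
    0 ≤ predictedMass q Ω t ν u j :=
  mul_nonneg (cylMass_nonneg u) (transProb_nonneg ht _ _)

lemma predictedMass_mul_klFun_nonneg (ht : TSol q Ω t) {k : ℕ} (u : Fin k → Fin m) (j : Fin m) :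
    0 ≤ predictedMass q Ω t ν u j *
      klFun (cylMass ν (Fin.snoc u j : Fin (k + 1) → Fin m) / predictedMass q Ω t ν u j) :=
  mul_nonneg (predictedMass_nonneg ht u j)
    (klFun_nonneg (div_nonneg (cylMass_nonneg _) (predictedMass_nonneg ht u j)))

lemma levelGap_nonneg (ht : TSol q Ω t) (k : ℕ) : 0 ≤ levelGap q Ω t ν k :=
  Finset.sum_nonneg fun u _ => Finset.sum_nonneg fun j _ => predictedMass_mul_klFun_nonneg ht u j

variable (hΩ : MeasurableSet Ω) [IsProbabilityMeasure ν] (hνΩ : ν Ω = 1) (ht : TSol q Ω t)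
include hΩ hνΩ ht

lemma sum_predictedMass {k : ℕ} (u : Fin k → Fin m) :
    ∑ j, predictedMass q Ω t ν u j = cylMass ν u := by
  simp only [predictedMass]
  by_cases hu : List.ofFn u ∈ Pref Ω
  · simp only [← Finset.mul_sum, sum_transProb ht hu, mul_one]
  · simp [cylMass_eq_zero hΩ hνΩ hu]

lemma cylMass_snoc_eq_zero {k : ℕ} {u : Fin k → Fin m} {j : Fin m}
    (h : predictedMass q Ω t ν u j = 0) : cylMass ν (Fin.snoc u j : Fin (k + 1) → Fin m) = 0 := by
  rcases mul_eq_zero.1 h with hu | hj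
  · refine le_antisymm ?_ (cylMass_nonneg _)
    rw [← hu, ← sum_cylMass_snoc u]
    exact Finset.single_le_sum (fun i _ => cylMass_nonneg _) (Finset.mem_univ j)
  · refine cylMass_eq_zero hΩ hνΩ fun hmem => ?_
    rw [ofFn_snoc] at hmem
    rw [transProb, if_pos hmem] at hj
    exact (div_pos (TSol.pos ht hmem) (pow_pos (TSol.pos ht (Pref.of_append hmem)) _)).ne' hj

lemma log_div_predictedMass {k : ℕ} {u : Fin k → Fin m} {j : Fin m}
    (hp : 0 < cylMass ν (Fin.snoc u j : Fin (k + 1) → Fin m)) :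
    log (cylMass ν (Fin.snoc u j : Fin (k + 1) → Fin m) / predictedMass q Ω t ν u j) =
      log (cylMass ν (Fin.snoc u j : Fin (k + 1) → Fin m)) - log (cylMass ν u) -
        log (t (List.ofFn (Fin.snoc u j : Fin (k + 1) → Fin m))) + q * log (t (List.ofFn u)) := by
  have hr : predictedMass q Ω t ν u j ≠ 0 := fun h => hp.ne' (cylMass_snoc_eq_zero hΩ hνΩ ht h)
  have ha : cylMass ν u ≠ 0 := fun h => hr (by rw [predictedMass, h, zero_mul])
  have hmem : List.ofFn u ++ [j] ∈ Pref Ω := by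
    by_contra hmem
    exact hr (by rw [predictedMass, transProb, if_neg hmem, mul_zero])
  have htu := TSol.pos ht (Pref.of_append hmem)
  rw [log_div hp.ne' hr, predictedMass, transProb, if_pos hmem, ofFn_snoc,
    log_mul ha (div_pos (TSol.pos ht hmem) (pow_pos htu _)).ne',
    log_div (TSol.pos ht hmem).ne' (pow_pos htu _).ne', log_pow]
  ring

lemma predictedMass_mul_klFun {k : ℕ} (u : Fin k → Fin m) (j : Fin m) :
    predictedMass q Ω t ν u j *
        klFun (cylMass ν (Fin.snoc u j : Fin (k + 1) → Fin m) / predictedMass q Ω t ν u j) =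
      (-negMulLog (cylMass ν (Fin.snoc u j : Fin (k + 1) → Fin m)) -
          cylMass ν (Fin.snoc u j : Fin (k + 1) → Fin m) *
            log (t (List.ofFn (Fin.snoc u j : Fin (k + 1) → Fin m)))) +
        cylMass ν (Fin.snoc u j : Fin (k + 1) → Fin m) *
          (q * log (t (List.ofFn u)) - log (cylMass ν u) - 1) +
        predictedMass q Ω t ν u j := by
  have h := mul_log_div_eq_mul_klFun_add (cylMass_snoc_eq_zero hΩ hνΩ ht (u := u) (j := j))
  rcases (cylMass_nonneg (ν := ν) (Fin.snoc u j : Fin (k + 1) → Fin m)).eq_or_lt with hp | hp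
  · rw [← hp] at h ⊢
    simp only [zero_mul, zero_sub, negMulLog_zero] at h ⊢
    linarith
  · rw [log_div_predictedMass hΩ hνΩ ht hp] at h
    simp only [negMulLog]
    linarith

lemma levelGap_eq (k : ℕ) :
    levelGap q Ω t ν k = (q * levelPotential t ν k - levelPotential t ν (k + 1)) -
      (levelEntropy ν (k + 1) - levelEntropy ν k) := by
  set X : (Fin (k + 1) → Fin m) → ℝ := fun v =>
    -negMulLog (cylMass ν v) - cylMass ν v * log (t (List.ofFn v))
  calc levelGap q Ω t ν k
      = ∑ u : Fin k → Fin m, (∑ j, X (Fin.snoc u j) +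
          (q * (cylMass ν u * log (t (List.ofFn u))) + negMulLog (cylMass ν u))) := by
        refine Finset.sum_congr rfl fun u _ => ?_
        rw [Finset.sum_congr rfl fun j _ => predictedMass_mul_klFun hΩ hνΩ ht u j,
          Finset.sum_add_distrib, Finset.sum_add_distrib, ← Finset.sum_mul, sum_cylMass_snoc,
          sum_predictedMass hΩ hνΩ ht]
        simp only [negMulLog, X]
        ring
    _ = _ := by
        rw [Finset.sum_add_distrib, ← sum_fun_succ X]
        simp only [X, levelPotential, levelEntropy, Finset.sum_sub_distrib, Finset.sum_add_distrib,
          Finset.sum_neg_distrib, Finset.mul_sum]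
        ring

lemma cylMass_snoc_eq_of_levelGap_eq_zero {k : ℕ} (h : levelGap q Ω t ν k = 0)
    (u : Fin k → Fin m) (j : Fin m) :
    cylMass ν (Fin.snoc u j : Fin (k + 1) → Fin m) = predictedMass q Ω t ν u j := by
  have hu := (Finset.sum_eq_zero_iff_of_nonneg fun u _ => Finset.sum_nonneg fun j _ =>
    predictedMass_mul_klFun_nonneg ht u j).1 h u (Finset.mem_univ _)
  have huj := (Finset.sum_eq_zero_iff_of_nonneg fun j _ =>
    predictedMass_mul_klFun_nonneg ht u j).1 hu j (Finset.mem_univ _)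
  rcases mul_eq_zero.1 huj with hr | hkl
  · rw [hr, cylMass_snoc_eq_zero hΩ hνΩ ht hr]
  · have hone := (klFun_eq_zero_iff (div_nonneg (cylMass_nonneg _)
      (predictedMass_nonneg ht u j))).1 hkl
    refine (div_eq_one_iff_eq fun hr => ?_).1 hone
    simp [hr] at hone

lemma cylVals_iff_cylMass_eq :
    CylVals q Ω t ν ↔
      ∀ (k : ℕ) (u : Fin k → Fin m), cylMass ν u = cylWeight q Ω t (List.ofFn u) := by
  constructor
  · intro hcv k u
    by_cases hu : List.ofFn u ∈ Pref Ω
    · rw [cylMass, hcv _ hu, ENNReal.toReal_ofReal, cylWeight, if_pos hu]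
      simpa [cylWeight, hu] using cylWeight_nonneg ht (List.ofFn u)
    · rw [cylMass_eq_zero hΩ hνΩ hu, cylWeight, if_neg hu]
  · intro h u hu
    have hmass := h u.length u.get
    rw [cylMass, List.ofFn_get] at hmass
    rw [← ENNReal.ofReal_toReal (measure_ne_top ν (Cyl u)), hmass, cylWeight, if_pos hu]

lemma levelGap_eq_zero_of_cylVals (hcv : CylVals q Ω t ν) (k : ℕ) : levelGap q Ω t ν k = 0 := by
  have hmass := (cylVals_iff_cylMass_eq hΩ hνΩ ht).1 hcv
  refine Finset.sum_eq_zero fun u _ => Finset.sum_eq_zero fun j _ => ?_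
  rw [hmass, ofFn_snoc, cylWeight_append_singleton, ← hmass, ← predictedMass]
  rcases eq_or_ne (predictedMass q Ω t ν u j) 0 with hr | hr
  · rw [hr, zero_mul]
  · rw [div_self hr, klFun_one, mul_zero]

lemma cylVals_of_levelGap_eq_zero (hne : Ω.Nonempty) (h : ∀ k, levelGap q Ω t ν k = 0) :
    CylVals q Ω t ν := by
  refine (cylVals_iff_cylMass_eq hΩ hνΩ ht).2 fun k => ?_
  induction k with
  | zero => intro u; rw [cylMass_nil, List.ofFn_zero, cylWeight_nil hne]
  | succ k ih =>
    intro u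
    rw [← Fin.snoc_init_self u, cylMass_snoc_eq_of_levelGap_eq_zero hΩ hνΩ ht (h k),
      predictedMass, ih, ofFn_snoc, cylWeight_append_singleton]

end Gap

section Series

lemma sub_one_pos_of_two_le {n : ℕ} (hn : 2 ≤ n) : (0 : ℝ) < n - 1 := by
  have : (2 : ℝ) ≤ n := by exact_mod_cast hn
  linarith

lemma log_pos_of_two_le {n : ℕ} (hn : 2 ≤ n) : 0 < log n :=
  log_pos (by exact_mod_cast hn)

lemma hasSum_telescoping {a b : ℕ → ℝ} {A B : ℝ} (x : ℝ) (ha : HasSum a A) (hb : HasSum b B) :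
    HasSum (fun k => (b k - b (k + 1)) + (x * a k - a (k + 1))) (b 0 + (x * A - (A - a 0))) := by
  have ha' := (hasSum_nat_add_iff' 1).2 ha
  have hb' := (hasSum_nat_add_iff' 1).2 hb
  simp only [Finset.sum_range_one] at ha' hb'
  have := (hb.sub hb').add ((ha.mul_left x).sub ha')
  rwa [sub_sub_cancel] at this

lemma summable_mul_pow_of_le {f : ℕ → ℝ} {x C D : ℝ} (hx0 : 0 ≤ x) (hx1 : x < 1)
    (hf0 : ∀ k, 0 ≤ f k) (hf : ∀ k, f k ≤ C * k + D) : Summable fun k => f k * x ^ k := by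
  have hgeo : Summable fun k : ℕ => (k : ℝ) * x ^ k := by
    simpa using summable_pow_mul_geometric_of_norm_lt_one 1 (by rwa [Real.norm_of_nonneg hx0])
  refine .of_nonneg_of_le (fun k => mul_nonneg (hf0 k) (pow_nonneg hx0 k)) (fun k => ?_)
    ((hgeo.mul_left C).add ((summable_geometric_of_lt_one hx0 hx1).mul_left D))
  calc f k * x ^ k ≤ (C * k + D) * x ^ k := mul_le_mul_of_nonneg_right (hf k) (pow_nonneg hx0 k)
    _ = C * (k * x ^ k) + D * x ^ k := by ring

variable (hm : 2 ≤ m) (hq : 2 ≤ (q : ℕ)) (hΩ : MeasurableSet Ω) [IsProbabilityMeasure ν]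
  (hνΩ : ν Ω = 1) (ht : TSol q Ω t)
include hm hq hΩ hνΩ ht

/-- Summing `levelGap_eq` against the weights `q^{-(k+1)}` telescopes, and what survives is
`s(Ω,ν)` and the potential of the root. -/
lemma hasSum_levelGap :
    HasSum (fun k => levelGap q Ω t ν k * (q : ℝ)⁻¹ ^ (k + 1))
      (log (t []) - sOm m q ν * log m / ((q : ℝ) - 1)) := by
  have hq1 : (1 : ℝ) < q := by linarith [sub_one_pos_of_two_le hq]
  have hlogm := log_pos_of_two_le hm
  set x : ℝ := (q : ℝ)⁻¹
  have hx0 : 0 ≤ x := inv_nonneg.2 (by positivity)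
  have hx1 : x < 1 := inv_lt_one_of_one_lt₀ hq1
  have hqx : (q : ℝ) * x = 1 := mul_inv_cancel₀ (by positivity)
  set a : ℕ → ℝ := fun k => levelEntropy ν k * x ^ k
  set b : ℕ → ℝ := fun k => levelPotential t ν k * x ^ k
  have ha : HasSum a (∑' k, a k) := (summable_mul_pow_of_le hx0 hx1 levelEntropy_nonneg
    (C := log m) (D := 0) fun k => by linarith [levelEntropy_le (ν := ν) k]).hasSum
  have hb : HasSum b (∑' k, b k) := (summable_mul_pow_of_le hx0 hx1
    (levelPotential_nonneg hΩ hνΩ ht) (C := 0) (D := log m / ((q : ℝ) - 1))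
    fun k => by linarith [levelPotential_le hΩ hνΩ ht hm k]).hasSum
  have ha0 : a 0 = 0 := by simp [a, levelEntropy_zero]
  have hb0 : b 0 = log (t []) := by simp [b, levelPotential_zero]
  have hsOm : sOm m q ν = ((q : ℝ) - 1) ^ 2 * (x / log m * ∑' k, a k) := by
    have ha' := (hasSum_nat_add_iff' 1).2 ha
    rw [Finset.sum_range_one, ha0, sub_zero] at ha'
    rw [sOm, ← ha'.tsum_eq, ← tsum_mul_left (a := x / log m)]
    congr 1
    exact tsum_congr fun k => by
      simp only [a, hent_eq_levelEntropy_div, x, inv_pow]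
      field_simp
      ring
  have hval : ((q : ℝ) - 1) ^ 2 * (x / log m * ∑' k, a k) * log m / ((q : ℝ) - 1) =
      ((q : ℝ) - 1) * x * ∑' k, a k := by
    field_simp
  convert hasSum_telescoping x ha hb using 1
  · funext k
    simp only [a, b, levelGap_eq hΩ hνΩ ht, pow_succ]
    linear_combination (levelPotential t ν k * x ^ k) * hqx
  · rw [ha0, hb0, hsOm, hval]
    linear_combination (-∑' k, a k) * hqx

end Series

section Maximality

lemma eq_mul_div_iff_sub_mul_div_eq_zero {s L c d : ℝ} (hc : c ≠ 0) (hd : d ≠ 0) :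
    s = c * L / d ↔ L - s * d / c = 0 := by
  rw [sub_eq_zero, eq_div_iff hd, eq_div_iff hc]
  constructor <;> intro h <;> linarith

variable (hm : 2 ≤ m) (hq : 2 ≤ (q : ℕ)) (hΩ : MeasurableSet Ω) [IsProbabilityMeasure ν]
  (hνΩ : ν Ω = 1) (ht : TSol q Ω t)
include hm hq hΩ hνΩ ht

lemma sOm_le : sOm m q ν ≤ ((q : ℝ) - 1) * log (t []) / log m := by
  have h := hasSum_le (fun k => mul_nonneg (levelGap_nonneg ht k) (by positivity)) hasSum_zero
    (hasSum_levelGap hm hq hΩ hνΩ ht)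
  rw [le_div_iff₀ (log_pos_of_two_le hm)]
  rw [sub_nonneg, div_le_iff₀ (sub_one_pos_of_two_le hq)] at h
  linarith

lemma sOm_eq_of_cylVals (hcv : CylVals q Ω t ν) :
    sOm m q ν = ((q : ℝ) - 1) * log (t []) / log m := by
  have h := hasSum_levelGap hm hq hΩ hνΩ ht
  simp only [levelGap_eq_zero_of_cylVals hΩ hνΩ ht hcv, zero_mul] at h
  exact (eq_mul_div_iff_sub_mul_div_eq_zero (sub_one_pos_of_two_le hq).ne'
    (log_pos_of_two_le hm).ne').2 (hasSum_zero.unique h).symm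

lemma cylVals_of_sOm_eq (hne : Ω.Nonempty)
    (h : sOm m q ν = ((q : ℝ) - 1) * log (t []) / log m) : CylVals q Ω t ν := by
  have hsum := hasSum_levelGap hm hq hΩ hνΩ ht
  rw [(eq_mul_div_iff_sub_mul_div_eq_zero (sub_one_pos_of_two_le hq).ne'
    (log_pos_of_two_le hm).ne').1 h, hasSum_zero_iff_of_nonneg
    fun k => mul_nonneg (levelGap_nonneg ht k) (by positivity)] at hsum
  refine cylVals_of_levelGap_eq_zero hΩ hνΩ ht hne fun k => ?_
  simpa using congr_fun hsum k

end Maximality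

end PrefixTree

open PrefixTree in
/-- **Proposition 2.5 (i).** The formula `μ[u₁…u_k] = ∏_j t(u₁…u_j)/t(u₁…u_{j-1})^q`
determines a unique Borel probability measure on `Ω`, and this `μ` is the unique maximizer of
`ν ↦ s(Ω,ν)` over Borel probability measures on `Ω`. -/
theorem stmt13 (m : ℕ) (hm : 2 ≤ m) (q : ℕ+) (hq : 2 ≤ (q : ℕ))
    (Ω : Set (ℕ+ → Fin m)) (hne : Ω.Nonempty) (hcl : IsClosed Ω)
    (t : List (Fin m) → ℝ) (ht : TSol q Ω t) :
    (∃! μ : Measure (ℕ+ → Fin m),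
        IsProbabilityMeasure μ ∧ μ Ω = 1 ∧ CylVals q Ω t μ) ∧
    ∀ μ : Measure (ℕ+ → Fin m), IsProbabilityMeasure μ → μ Ω = 1 → CylVals q Ω t μ →
      (∀ ν : Measure (ℕ+ → Fin m), IsProbabilityMeasure ν → ν Ω = 1 →
        sOm m q ν ≤ sOm m q μ) ∧
      (∀ ν : Measure (ℕ+ → Fin m), IsProbabilityMeasure ν → ν Ω = 1 →
        sOm m q ν = sOm m q μ → ν = μ) := by
  have : NeZero m := ⟨by omega⟩
  have hΩ := hcl.measurableSet
  have hμ₀ := isProbabilityMeasure_treeMeasure hne ht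
  have hμ₀Ω := treeMeasure_omega hne ht hcl
  have hμ₀cyl := cylVals_treeMeasure hne ht
  refine ⟨⟨treeMeasure q Ω t, ⟨hμ₀, hμ₀Ω, hμ₀cyl⟩,
    fun μ ⟨_, hμΩ, hμ⟩ => eq_of_cylVals hΩ hμΩ hμ₀Ω hμ hμ₀cyl⟩, fun μ _ hμΩ hμ => ?_⟩
  rw [sOm_eq_of_cylVals hm hq hΩ hμΩ ht hμ]
  exact ⟨fun ν _ hνΩ => sOm_le hm hq hΩ hνΩ ht, fun ν _ hνΩ hs =>
    eq_of_cylVals hΩ hνΩ hμΩ (cylVals_of_sOm_eq hm hq hΩ hνΩ ht hne hs) hμ⟩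
end
end

section
/- Let m ≥ 2, let q ≥ 2 be an integer, and let Ω be a nonempty closed subset of Σ_m. Let t be the unique [1, m^{1/(q-1)}]-valued solution of t(u)^q = Σ_{j : uj ∈ Pref(Ω)} t(uj) on the tree of prefixes of Ω, and let μ be the Borel probability measure on Ω with μ[u₁…u_k] = ∏_{j=1}^k t(u₁…u_j)/t(u₁…u_{j-1})^q. Then s(Ω,μ) = (q−1) · log_m t(∅). -/
open scoped Classical ENNReal
open Filter MeasureTheory Topology

noncomputable section

/-!
Write `p u = μ[u]` and `B k = ∑_{|u| = k} p u · log_m t(u)`.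
Because `p(uj) = p(u) t(uj) / t(u)^q` and `∑_j t(uj) = t(u)^q`, splitting `log_m p(uj)` gives
`H_{k+1} = H_k + q B_k - B_{k+1}`, so `H_k = ∑_{j<k} (q B_j - B_{j+1})`, while
`0 ≤ B_k ≤ 1/(q-1)` since `1 ≤ t ≤ m^{1/(q-1)}`. Summing against `q^{-(k+1)}` is a Cauchy
product with a geometric series followed by a telescoping sum, and gives
`∑_k H_k / q^{k+1} = B_0 / (q-1) = log_m t(∅) / (q-1)`.
-/

lemma tsum_sum_range_mul_pow {c : ℕ → ℝ} {C r : ℝ} (hc : ∀ j, |c j| ≤ C) (hr₀ : 0 ≤ r)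
    (hr₁ : r < 1) :
    ∑' k, (∑ j ∈ Finset.range (k + 1), c j) * r ^ k = (∑' j, c j * r ^ j) / (1 - r) := by
  have hgeom : Summable fun i => ‖r ^ i‖ := by
    simpa [norm_pow, Real.norm_of_nonneg hr₀] using summable_geometric_of_lt_one hr₀ hr₁
  have hcr : Summable fun j => ‖c j * r ^ j‖ := by
    refine .of_nonneg_of_le (fun _ => norm_nonneg _) (fun j => ?_) (hgeom.mul_left C)
    rw [norm_mul, Real.norm_eq_abs]
    exact mul_le_mul_of_nonneg_right (hc j) (norm_nonneg _)
  rw [div_eq_mul_inv, ← tsum_geometric_of_lt_one hr₀ hr₁,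
    tsum_mul_tsum_eq_tsum_sum_range_of_summable_norm hcr hgeom]
  refine tsum_congr fun k => ?_
  rw [Finset.sum_mul]
  refine Finset.sum_congr rfl fun j hj => ?_
  rw [mul_assoc, ← pow_add, Nat.add_sub_cancel' (Finset.mem_range_succ_iff.mp hj)]

lemma tsum_mul_sub_mul_inv_pow {B : ℕ → ℝ} {C q : ℝ} (hB : ∀ j, |B j| ≤ C) (hq : 1 < q) :
    ∑' j, (q * B j - B (j + 1)) * q⁻¹ ^ j = q * B 0 := by
  have hq₀ : 0 < q := by linarith
  have hf : Summable fun j => B j * q⁻¹ ^ j := by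
    refine Summable.of_norm_bounded (g := fun j => C * q⁻¹ ^ j)
      ((summable_geometric_of_lt_one (by positivity) (inv_lt_one_of_one_lt₀ hq)).mul_left C)
      fun j => ?_
    rw [norm_mul, norm_pow, Real.norm_eq_abs, Real.norm_of_nonneg (by positivity)]
    exact mul_le_mul_of_nonneg_right (hB j) (by positivity)
  have hshift : ∀ j, (q * B j - B (j + 1)) * q⁻¹ ^ j
      = q * (B j * q⁻¹ ^ j - B (j + 1) * q⁻¹ ^ (j + 1)) := by
    intro j
    rw [pow_succ]
    field_simp
  rw [tsum_congr hshift, tsum_mul_left, hf.tsum_sub ((summable_nat_add_iff 1).mpr hf),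
    hf.tsum_eq_zero_add]
  simp

lemma tsum_sum_range_mul_sub_div_pow {B : ℕ → ℝ} {C q : ℝ} (hB : ∀ j, |B j| ≤ C) (hq : 1 < q) :
    ∑' k, (∑ j ∈ Finset.range (k + 1), (q * B j - B (j + 1))) / q ^ (k + 2) = B 0 / (q - 1) := by
  have hq₀ : 0 < q := by linarith
  have hc : ∀ j, |q * B j - B (j + 1)| ≤ q * C + C := fun j => by
    calc |q * B j - B (j + 1)| ≤ |q * B j| + |B (j + 1)| := abs_sub _ _
      _ ≤ q * C + C := by
        rw [abs_mul, abs_of_pos hq₀]; gcongr; exacts [hB j, hB (j + 1)]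
  have hterm : ∀ k, (∑ j ∈ Finset.range (k + 1), (q * B j - B (j + 1))) / q ^ (k + 2)
      = q⁻¹ ^ 2 * ((∑ j ∈ Finset.range (k + 1), (q * B j - B (j + 1))) * q⁻¹ ^ k) := by
    intro k
    rw [pow_add, inv_pow, inv_pow]
    field_simp
  rw [tsum_congr hterm, tsum_mul_left,
    tsum_sum_range_mul_pow hc (by positivity) (inv_lt_one_of_one_lt₀ hq),
    tsum_mul_sub_mul_inv_pow hB hq]
  field_simp

section Prefixes

variable {m : ℕ} {Ω : Set (ℕ+ → Fin m)}

lemma begins_take {x : ℕ+ → Fin m} {u : List (Fin m)} (h : Begins x u) (n : ℕ) :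
    Begins x (u.take n) := fun j => by
  simpa [List.get_eq_getElem] using h ⟨j, lt_of_lt_of_le j.isLt (by simp)⟩

lemma nil_mem_pref (hne : Ω.Nonempty) : [] ∈ Pref Ω :=
  let ⟨x, hx⟩ := hne
  ⟨x, hx, fun j => j.elim0⟩

lemma take_mem_pref {u : List (Fin m)} (h : u ∈ Pref Ω) (n : ℕ) : u.take n ∈ Pref Ω :=
  let ⟨x, hx, hu⟩ := h
  ⟨x, hx, begins_take hu n⟩

lemma mem_pref_of_append_mem {u : List (Fin m)} {a : Fin m} (h : u ++ [a] ∈ Pref Ω) :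
    u ∈ Pref Ω := by
  simpa using take_mem_pref h u.length

end Prefixes

lemma sum_ofFn_succ {α M : Type*} [Fintype α] [AddCommMonoid M] (k : ℕ) (G : List α → M) :
    ∑ u : Fin (k + 1) → α, G (List.ofFn u) = ∑ v : Fin k → α, ∑ a : α, G (List.ofFn v ++ [a]) := by
  rw [← (Fin.snocEquiv fun _ => α).sum_comp, Fintype.sum_prod_type, Finset.sum_comm]
  refine Finset.sum_congr rfl fun v _ => Finset.sum_congr rfl fun a _ => congrArg G ?_
  rw [List.ofFn_succ', List.concat_eq_append]
  simp [Fin.snocEquiv]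

section CylinderMass

variable {m : ℕ} {q : ℕ+} {Ω : Set (ℕ+ → Fin m)} {t : List (Fin m) → ℝ}

lemma TSol.pos (ht : TSol q Ω t) {u : List (Fin m)} (hu : u ∈ Pref Ω) : 0 < t u :=
  zero_lt_one.trans_le (ht u hu).1.1

variable (q Ω t) in
def cylMass (u : List (Fin m)) : ℝ :=
  if u ∈ Pref Ω then ∏ j ∈ Finset.range u.length, t (u.take (j + 1)) / t (u.take j) ^ (q : ℕ)
  else 0

lemma cylMass_nil (hnil : [] ∈ Pref Ω) : cylMass q Ω t [] = 1 := by
  simp [cylMass, hnil]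

lemma cylMass_of_not_mem {u : List (Fin m)} (hu : u ∉ Pref Ω) : cylMass q Ω t u = 0 :=
  if_neg hu

lemma cylMass_pos (ht : TSol q Ω t) {u : List (Fin m)} (hu : u ∈ Pref Ω) :
    0 < cylMass q Ω t u := by
  rw [cylMass, if_pos hu]
  exact Finset.prod_pos fun j _ =>
    div_pos (ht.pos (take_mem_pref hu _)) (pow_pos (ht.pos (take_mem_pref hu _)) _)

lemma cylMass_nonneg (ht : TSol q Ω t) (u : List (Fin m)) : 0 ≤ cylMass q Ω t u := by
  by_cases hu : u ∈ Pref Ω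
  · exact (cylMass_pos ht hu).le
  · rw [cylMass_of_not_mem hu]

lemma cylMass_append {u : List (Fin m)} {a : Fin m} (h : u ++ [a] ∈ Pref Ω) :
    cylMass q Ω t (u ++ [a]) = cylMass q Ω t u * (t (u ++ [a]) / t u ^ (q : ℕ)) := by
  rw [cylMass, if_pos h, cylMass, if_pos (mem_pref_of_append_mem h), List.length_append,
    List.length_singleton, Finset.prod_range_succ, List.take_left' rfl,
    List.take_of_length_le (by simp)]
  congr 1
  refine Finset.prod_congr rfl fun j hj => ?_
  have hj : j < u.length := Finset.mem_range.mp hj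
  rw [List.take_append_of_le_length (by omega), List.take_append_of_le_length (by omega)]

lemma sum_cylMass_append (ht : TSol q Ω t) (u : List (Fin m)) :
    ∑ a : Fin m, cylMass q Ω t (u ++ [a]) = cylMass q Ω t u := by
  by_cases hu : u ∈ Pref Ω
  · have hchild : ∀ a, cylMass q Ω t (u ++ [a])
        = cylMass q Ω t u / t u ^ (q : ℕ) * if u ++ [a] ∈ Pref Ω then t (u ++ [a]) else 0 := by
      intro a
      split_ifs with ha
      · rw [cylMass_append ha]; ring
      · rw [cylMass_of_not_mem ha, mul_zero]
    have htu : t u ^ (q : ℕ) ≠ 0 := pow_ne_zero _ (ht.pos hu).ne'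
    rw [Finset.sum_congr rfl fun a _ => hchild a, ← Finset.mul_sum, ← Finset.sum_filter,
      ← (ht u hu).2, div_mul_cancel₀ _ htu]
  · rw [cylMass_of_not_mem hu]
    exact Finset.sum_eq_zero fun a _ => cylMass_of_not_mem fun h => hu (mem_pref_of_append_mem h)

lemma sum_cylMass_ofFn (ht : TSol q Ω t) (hnil : [] ∈ Pref Ω) (k : ℕ) :
    ∑ u : Fin k → Fin m, cylMass q Ω t (List.ofFn u) = 1 := by
  induction k with
  | zero => simp [cylMass_nil hnil]
  | succ k ih =>
    simp only [sum_ofFn_succ k (cylMass q Ω t), sum_cylMass_append ht, ih]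

lemma cylMass_append_mul_logb (ht : TSol q Ω t) (u : List (Fin m)) (a : Fin m) :
    cylMass q Ω t (u ++ [a]) * Real.logb m (cylMass q Ω t (u ++ [a]))
      = cylMass q Ω t (u ++ [a]) * (Real.logb m (cylMass q Ω t u) - q * Real.logb m (t u))
        + cylMass q Ω t (u ++ [a]) * Real.logb m (t (u ++ [a])) := by
  by_cases ha : u ++ [a] ∈ Pref Ω
  · have hu := mem_pref_of_append_mem ha
    have htu : t u ^ (q : ℕ) ≠ 0 := pow_ne_zero _ (ht.pos hu).ne'
    rw [cylMass_append ha, Real.logb_mul (cylMass_pos ht hu).ne'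
      (div_ne_zero (ht.pos ha).ne' htu), Real.logb_div (ht.pos ha).ne' htu, Real.logb_pow]
    ring
  · simp [cylMass_of_not_mem ha]

lemma sum_cylMass_append_mul_logb (ht : TSol q Ω t) (u : List (Fin m)) :
    ∑ a : Fin m, cylMass q Ω t (u ++ [a]) * Real.logb m (cylMass q Ω t (u ++ [a]))
      = cylMass q Ω t u * Real.logb m (cylMass q Ω t u) - q * (cylMass q Ω t u * Real.logb m (t u))
        + ∑ a : Fin m, cylMass q Ω t (u ++ [a]) * Real.logb m (t (u ++ [a])) := by
  rw [Finset.sum_congr rfl fun a _ => cylMass_append_mul_logb ht u a, Finset.sum_add_distrib,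
    ← Finset.sum_mul, sum_cylMass_append ht]
  ring

variable (q Ω t) in
def meanLogb (k : ℕ) : ℝ :=
  ∑ u : Fin k → Fin m, cylMass q Ω t (List.ofFn u) * Real.logb m (t (List.ofFn u))

lemma meanLogb_zero (hnil : [] ∈ Pref Ω) : meanLogb q Ω t 0 = Real.logb m (t []) := by
  simp [meanLogb, cylMass_nil hnil]

lemma abs_meanLogb_le (ht : TSol q Ω t) (hnil : [] ∈ Pref Ω) (hm : 1 < (m : ℝ)) (k : ℕ) :
    |meanLogb q Ω t k| ≤ 1 / ((q : ℝ) - 1) := by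
  have hlog : ∀ u ∈ Pref Ω, Real.logb m (t u) ∈ Set.Icc 0 (1 / ((q : ℝ) - 1)) := fun u hu =>
    ⟨Real.logb_nonneg hm (ht u hu).1.1, by
      rw [← Real.logb_rpow (b := m) (by linarith) hm.ne' (x := 1 / ((q : ℝ) - 1))]
      exact Real.logb_le_logb_of_le hm (ht.pos hu) (ht u hu).1.2⟩
  have hterm : ∀ u : List (Fin m), cylMass q Ω t u * Real.logb m (t u)
      ∈ Set.Icc 0 (cylMass q Ω t u * (1 / ((q : ℝ) - 1))) := fun u => by
    by_cases hu : u ∈ Pref Ω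
    · exact ⟨mul_nonneg (cylMass_nonneg ht u) (hlog u hu).1,
        mul_le_mul_of_nonneg_left (hlog u hu).2 (cylMass_nonneg ht u)⟩
    · simp [cylMass_of_not_mem hu]
  rw [meanLogb, abs_of_nonneg (Finset.sum_nonneg fun u _ => (hterm _).1)]
  calc _ ≤ ∑ u : Fin k → Fin m, cylMass q Ω t (List.ofFn u) * (1 / ((q : ℝ) - 1)) :=
        Finset.sum_le_sum fun u _ => (hterm _).2
    _ = 1 / ((q : ℝ) - 1) := by rw [← Finset.sum_mul, sum_cylMass_ofFn ht hnil, one_mul]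

end CylinderMass

section Entropy

variable {m : ℕ} {q : ℕ+} {Ω : Set (ℕ+ → Fin m)} {t : List (Fin m) → ℝ}
  {μ : Measure (ℕ+ → Fin m)}

lemma toReal_measure_cyl [IsProbabilityMeasure μ] (ht : TSol q Ω t) (hcl : IsClosed Ω)
    (hμΩ : μ Ω = 1) (hcyl : CylVals q Ω t μ) (u : List (Fin m)) :
    (μ (Cyl u)).toReal = cylMass q Ω t u := by
  by_cases hu : u ∈ Pref Ω
  · have hmass := cylMass_nonneg ht u
    rw [cylMass, if_pos hu] at hmass ⊢
    rw [hcyl u hu, ENNReal.toReal_ofReal hmass]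
  · have hcompl : μ Ωᶜ = 0 := (prob_compl_eq_zero_iff hcl.measurableSet).mpr hμΩ
    have hsub : Cyl u ⊆ Ωᶜ := fun x hx hxΩ => hu ⟨x, hxΩ, hx⟩
    rw [measure_mono_null hsub hcompl, cylMass_of_not_mem hu, ENNReal.toReal_zero]

lemma Hent_zero (hμ : ∀ u, (μ (Cyl u)).toReal = cylMass q Ω t u) (hnil : [] ∈ Pref Ω) :
    Hent m μ 0 = 0 := by
  simp [Hent, hμ, cylMass_nil hnil]

lemma Hent_succ (hμ : ∀ u, (μ (Cyl u)).toReal = cylMass q Ω t u) (ht : TSol q Ω t) (k : ℕ) :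
    Hent m μ (k + 1) = Hent m μ k + q * meanLogb q Ω t k - meanLogb q Ω t (k + 1) := by
  rw [Hent, Hent, meanLogb, meanLogb]
  simp only [hμ]
  rw [sum_ofFn_succ k fun u => cylMass q Ω t u * Real.logb m (cylMass q Ω t u),
    sum_ofFn_succ k fun u => cylMass q Ω t u * Real.logb m (t u)]
  simp only [sum_cylMass_append_mul_logb ht, Finset.sum_add_distrib, Finset.sum_sub_distrib,
    Finset.mul_sum]
  ring

lemma Hent_succ_eq_sum (hμ : ∀ u, (μ (Cyl u)).toReal = cylMass q Ω t u) (ht : TSol q Ω t)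
    (hnil : [] ∈ Pref Ω) (k : ℕ) :
    Hent m μ (k + 1)
      = ∑ j ∈ Finset.range (k + 1), (q * meanLogb q Ω t j - meanLogb q Ω t (j + 1)) :=
  (Finset.sum_range_induction _ _ (Hent_zero hμ hnil) (k + 1)
    fun j _ => by rw [Hent_succ hμ ht]; ring).symm

end Entropy

/-- **Proposition 2.5 (ii).** For the optimal measure `μ`, `s(Ω,μ) = (q-1) log_m t(∅)`. -/
theorem stmt14 (m : ℕ) (hm : 2 ≤ m) (q : ℕ+) (hq : 2 ≤ (q : ℕ))
    (Ω : Set (ℕ+ → Fin m)) (hne : Ω.Nonempty) (hcl : IsClosed Ω)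
    (t : List (Fin m) → ℝ) (ht : TSol q Ω t)
    (μ : Measure (ℕ+ → Fin m)) [IsProbabilityMeasure μ] (hμΩ : μ Ω = 1)
    (hcyl : CylVals q Ω t μ) :
    sOm m q μ = ((q : ℝ) - 1) * Real.logb m (t []) := by
  have hnil := nil_mem_pref hne
  have hμ := toReal_measure_cyl ht hcl hμΩ hcyl
  have hm₁ : (1 : ℝ) < m := by exact_mod_cast hm
  have hq₁ : (1 : ℝ) < q := by exact_mod_cast hq
  rw [sOm, tsum_congr fun k => by rw [Hent_succ_eq_sum hμ ht hnil k],
    tsum_sum_range_mul_sub_div_pow (abs_meanLogb_le ht hnil hm₁) hq₁, meanLogb_zero hnil]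
  field_simp [(sub_pos.mpr hq₁).ne']
end
end

section
/- Let X = {(x_k)_{k≥1} ∈ {0,1,2}^{ℕ⁺} : if x_k = 1 then x_{2k} = 0, and if x_k = 2 then x_{2k} = 1, for all k ≥ 1}. Then the Minkowski dimension of X exists and equals Σ_{k=1}^∞ log₃(T_{k-1}) / 2^{k+1}, where T_0 = 3, T_1 = 5, T_2 = 9 and T_{k+2} = T_{k-1} + T_k + T_{k+1} for k ≥ 1. -/
open scoped Classical ENNReal
open Filter MeasureTheory Topology

noncomputable section

/-!
The constraints only link `x k` with `x (2 * k)`, so a word of length `n` splits along the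
chains `i, 2 i, 4 i, …` (`i` odd, `2 ^ ℓ * i ≤ n`) into independent words, each a path of the
relation `R a b := (a = 1 → b = 0) ∧ (a = 2 → b = 1)`. Hence
`N_n = ∏_{i ≤ n odd} W (⌊log₂ (n / i)⌋ + 1)`, where `W L` counts `R`-paths of length `L`;
splitting a path by its first letter gives the Tribonacci recursion `W (k + 1) = T k`.
About `n / 2 ^ (k + 2)` odd `i ≤ n` have `⌊log₂ (n / i)⌋ = k`, and since `log₃ W (k + 1) ≤ k + 1`,
Tannery's theorem turns `log₃ N_n / n` into `∑ log₃ T k / 2 ^ (k + 2)`.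
-/

namespace MultShift

open Finset

section Words

variable {α : Type*}

def IsRelChain (R : α → α → Prop) {L : ℕ} (c : Fin L → α) : Prop :=
  ∀ ℓ ℓ' : Fin L, (ℓ' : ℕ) = ℓ + 1 → R (c ℓ) (c ℓ')

def chainCount (R : α → α → Prop) (L : ℕ) : ℕ := Nat.card {c : Fin L → α // IsRelChain R c}

-- Index `j` stands for position `j + 1`, so index `2 * j + 1` stands for position `2 * (j + 1)`.
def IsAdmissibleWord (R : α → α → Prop) {n : ℕ} (v : Fin n → α) : Prop :=
  ∀ j k : Fin n, (k : ℕ) = 2 * j + 1 → R (v j) (v k)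

def multShift (R : α → α → Prop) : Set (ℕ+ → α) := {x | ∀ k, R (x k) (x (2 * k))}

-- Same indexing as `IsAdmissibleWord`: the parent of index `2 * j + 1` is `j`.
def extendWord (f : α → α) (a₀ : α) {n : ℕ} (v : Fin n → α) (q : ℕ) : α :=
  if h : q < n then v ⟨q, h⟩
  else if hq : q % 2 = 1 then f (extendWord f a₀ v (q / 2))
  else a₀
decreasing_by omega

variable {f : α → α} {a₀ : α} {n : ℕ} {v : Fin n → α}

lemma extendWord_of_lt {q : ℕ} (h : q < n) : extendWord f a₀ v q = v ⟨q, h⟩ := by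
  rw [extendWord, dif_pos h]

lemma extendWord_two_mul_add_one {q : ℕ} (h : ¬ 2 * q + 1 < n) :
    extendWord f a₀ v (2 * q + 1) = f (extendWord f a₀ v q) := by
  rw [extendWord, dif_neg h, dif_pos (by omega)]
  congr 2
  omega

lemma rel_extendWord {R : α → α → Prop} (hf : ∀ a, R a (f a)) (hv : IsAdmissibleWord R v)
    (q : ℕ) : R (extendWord f a₀ v q) (extendWord f a₀ v (2 * q + 1)) := by
  by_cases h : 2 * q + 1 < n
  · rw [extendWord_of_lt (by omega), extendWord_of_lt h]
    exact hv _ _ rfl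
  · rw [extendWord_two_mul_add_one h]
    exact hf _

end Words

section Prefixes

variable {m n : ℕ}

lemma begins_ofFn_iff (x : ℕ+ → Fin m) (v : Fin n → Fin m) :
    Begins x (List.ofFn v) ↔ ∀ j : Fin n, x ⟨j + 1, Nat.succ_pos _⟩ = v j := by
  simp only [Begins, List.get_ofFn]
  exact ⟨fun h j => by simpa using h (j.cast List.length_ofFn.symm),
    fun h j => by simpa using h (j.cast List.length_ofFn)⟩

lemma nwords_eq_ncard (X : Set (ℕ+ → Fin m)) :
    NWords n X = Set.ncard {v : Fin n → Fin m | List.ofFn v ∈ Pref X} := by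
  rw [NWords, ← Set.ncard_image_of_injective _ List.ofFn_injective]
  congr 1
  ext u
  constructor
  · rintro ⟨rfl, hu⟩
    exact ⟨u.get, by simpa using hu, List.ofFn_get u⟩
  · rintro ⟨v, hv, rfl⟩
    exact ⟨List.length_ofFn, hv⟩

lemma ofFn_mem_pref_multShift_iff [NeZero m] {R : Fin m → Fin m → Prop} (hR : ∀ a, ∃ b, R a b)
    (v : Fin n → Fin m) : List.ofFn v ∈ Pref (multShift R) ↔ IsAdmissibleWord R v := by
  simp only [Pref, Set.mem_ofPred_eq, begins_ofFn_iff]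
  constructor
  · rintro ⟨x, hx, hxv⟩ j k hjk
    have h2k : (k : ℕ).succPNat = 2 * (j : ℕ).succPNat := PNat.eq (by simp [hjk]; ring)
    rw [← hxv, ← hxv]
    change R (x (j : ℕ).succPNat) (x (k : ℕ).succPNat)
    exact h2k ▸ hx _
  · intro hv
    choose f hf using hR
    refine ⟨fun p => extendWord f 0 v p.natPred, fun k => ?_, fun j => extendWord_of_lt j.2⟩
    have h2k : (2 * k).natPred = 2 * k.natPred + 1 := by
      have := k.pos
      simp [PNat.natPred]
      omega
    simp only [h2k]
    exact rel_extendWord hf hv _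

end Prefixes

section OddDecomposition

lemma padicValNat_two_pow_mul_odd {a i : ℕ} (hi : Odd i) : padicValNat 2 (2 ^ a * i) = a := by
  rw [padicValNat.mul (by positivity) (by rintro rfl; simp at hi), padicValNat.prime_pow,
    padicValNat.eq_zero_of_not_dvd hi.not_two_dvd_nat, add_zero]

lemma two_pow_mul_odd_inj {a b i j : ℕ} (hi : Odd i) (hj : Odd j) (h : 2 ^ a * i = 2 ^ b * j) :
    a = b ∧ i = j := by
  have hab : a = b := by
    rw [← padicValNat_two_pow_mul_odd (a := a) hi, h, padicValNat_two_pow_mul_odd hj]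
  subst hab
  exact ⟨rfl, Nat.eq_of_mul_eq_mul_left (by positivity) h⟩

def oddsLE (n : ℕ) : Finset ℕ := {i ∈ Finset.range (n + 1) | Odd i}

lemma mem_oddsLE {n i : ℕ} : i ∈ oddsLE n ↔ Odd i ∧ i ≤ n := by
  simp [oddsLE, and_comm]

def chainLength (n i : ℕ) : ℕ := Nat.log 2 (n / i) + 1

lemma lt_chainLength_iff {n i ℓ : ℕ} (hi : 0 < i) (hin : i ≤ n) :
    ℓ < chainLength n i ↔ 2 ^ ℓ * i ≤ n := by
  rw [chainLength, Nat.lt_succ_iff, Nat.le_log_iff_pow_le one_lt_two (Nat.div_pos hin hi).ne',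
    Nat.le_div_iff_mul_le hi]

variable {n : ℕ}

lemma oddsLE_pos {i : ℕ} (hi : i ∈ oddsLE n) : 0 < i := (mem_oddsLE.1 hi).1.pos

def dyadicPos (n : ℕ) (p : Σ i : oddsLE n, Fin (chainLength n i)) : Fin n :=
  ⟨2 ^ (p.2 : ℕ) * p.1 - 1, by
    have hi := mem_oddsLE.1 p.1.2
    have := (lt_chainLength_iff hi.1.pos hi.2).1 p.2.2
    have := Nat.mul_pos (Nat.two_pow_pos (p.2 : ℕ)) hi.1.pos
    omega⟩

lemma dyadicPos_add_one (p : Σ i : oddsLE n, Fin (chainLength n i)) :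
    (dyadicPos n p : ℕ) + 1 = 2 ^ (p.2 : ℕ) * p.1 :=
  Nat.sub_add_cancel (Nat.mul_pos (Nat.two_pow_pos _) (oddsLE_pos p.1.2))

lemma dyadicPos_bijective : Function.Bijective (dyadicPos n) := by
  constructor
  · rintro ⟨⟨i, hi⟩, ℓ⟩ ⟨⟨j, hj⟩, ℓ'⟩ h
    have h' := dyadicPos_add_one ⟨⟨i, hi⟩, ℓ⟩
    rw [h, dyadicPos_add_one] at h'
    obtain ⟨hℓ, rfl⟩ := two_pow_mul_odd_inj (mem_oddsLE.1 hj).1 (mem_oddsLE.1 hi).1 h'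
    obtain rfl : ℓ = ℓ' := Fin.ext hℓ.symm
    rfl
  · intro q
    obtain ⟨ℓ, i, hi, hq⟩ := Nat.exists_eq_two_pow_mul_odd (n := q + 1) (by omega)
    have hiq : i ≤ q + 1 := hq ▸ Nat.le_mul_of_pos_left i (Nat.two_pow_pos ℓ)
    have hin : i ∈ oddsLE n := mem_oddsLE.2 ⟨hi, by omega⟩
    refine ⟨⟨⟨i, hin⟩, ⟨ℓ, (lt_chainLength_iff hi.pos (by omega)).2 (by omega)⟩⟩, Fin.ext ?_⟩
    simp only [dyadicPos]
    omega

def dyadicPosEquiv (n : ℕ) : (Σ i : oddsLE n, Fin (chainLength n i)) ≃ Fin n :=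
  Equiv.ofBijective _ dyadicPos_bijective

lemma dyadicPosEquiv_eq_two_mul_add_one_iff (p q : Σ i : oddsLE n, Fin (chainLength n i)) :
    (dyadicPosEquiv n q : ℕ) = 2 * dyadicPosEquiv n p + 1 ↔ q.1 = p.1 ∧ (q.2 : ℕ) = p.2 + 1 := by
  have hp := dyadicPos_add_one p
  have hq := dyadicPos_add_one q
  obtain ⟨⟨i, hi⟩, ℓ⟩ := p
  obtain ⟨⟨j, hj⟩, ℓ'⟩ := q
  simp only [dyadicPosEquiv, Equiv.ofBijective_apply, Subtype.mk.injEq] at hp hq ⊢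
  constructor
  · intro h
    have : 2 ^ (ℓ' : ℕ) * j = 2 ^ ((ℓ : ℕ) + 1) * i := by rw [pow_succ]; linarith
    obtain ⟨h1, h2⟩ := two_pow_mul_odd_inj (mem_oddsLE.1 hj).1 (mem_oddsLE.1 hi).1 this
    exact ⟨h2, h1⟩
  · rintro ⟨rfl, h⟩
    rw [h, pow_succ] at hq
    linarith

end OddDecomposition

section Decomposition

variable {α : Type*} {R : α → α → Prop} {n : ℕ}

lemma isAdmissibleWord_iff_forall_isRelChain (v : Fin n → α) :
    IsAdmissibleWord R v ↔
      ∀ i : oddsLE n, IsRelChain R fun ℓ => v (dyadicPosEquiv n ⟨i, ℓ⟩) := by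
  constructor
  · intro hv i ℓ ℓ' h
    exact hv _ _ ((dyadicPosEquiv_eq_two_mul_add_one_iff _ _).2 ⟨rfl, h⟩)
  · intro hc j k hjk
    obtain ⟨⟨i, ℓ⟩, rfl⟩ := (dyadicPosEquiv n).surjective j
    obtain ⟨⟨i', ℓ'⟩, rfl⟩ := (dyadicPosEquiv n).surjective k
    obtain ⟨rfl, h⟩ := (dyadicPosEquiv_eq_two_mul_add_one_iff _ _).1 hjk
    exact hc _ ℓ ℓ' h

def admissibleWordsEquiv (R : α → α → Prop) (n : ℕ) :
    {v : Fin n → α // IsAdmissibleWord R v} ≃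
      ∀ i : oddsLE n, {c : Fin (chainLength n i) → α // IsRelChain R c} :=
  (Equiv.subtypeEquiv
    (((dyadicPosEquiv n).arrowCongr (Equiv.refl α)).symm.trans (Equiv.piCurry fun _ _ => α))
    isAdmissibleWord_iff_forall_isRelChain).trans Equiv.subtypePiEquivPi

lemma card_admissibleWords :
    Nat.card {v : Fin n → α // IsAdmissibleWord R v} =
      ∏ i ∈ oddsLE n, chainCount R (chainLength n i) := by
  rw [Nat.card_congr (admissibleWordsEquiv R n), Nat.card_pi]
  exact Finset.prod_coe_sort (oddsLE n) fun i => chainCount R (chainLength n i)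

end Decomposition

lemma nwords_multShift {m : ℕ} [NeZero m] {R : Fin m → Fin m → Prop} (hR : ∀ a, ∃ b, R a b)
    (n : ℕ) : NWords n (multShift R) = ∏ i ∈ oddsLE n, chainCount R (chainLength n i) := by
  simp only [nwords_eq_ncard, ofFn_mem_pref_multShift_iff hR, ← card_admissibleWords]
  exact (Nat.card_coe_set_eq _).symm

section ChainCount

variable {α : Type*} {R : α → α → Prop}

lemma isRelChain_cons {L : ℕ} (a : α) (d : Fin (L + 1) → α) :
    IsRelChain R (Fin.cons a d : Fin (L + 2) → α) ↔ R a (d 0) ∧ IsRelChain R d := by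
  constructor
  · intro h
    exact ⟨by simpa using h 0 1 rfl, fun ℓ ℓ' hℓ => by simpa using h ℓ.succ ℓ'.succ (by simp [hℓ])⟩
  · rintro ⟨h0, hd⟩ ℓ ℓ' h
    induction ℓ using Fin.cases <;> induction ℓ' using Fin.cases <;> simp at h ⊢
    · simpa [Fin.ext_iff, h] using h0
    · exact hd _ _ h

lemma chainCount_pos [Finite α] [Nonempty α] (hR : ∀ a, ∃ b, R a b) (L : ℕ) :
    0 < chainCount R L := by
  choose f hf using hR
  obtain ⟨a⟩ := ‹Nonempty α›
  have hc : IsRelChain R fun ℓ : Fin L => f^[ℓ] a := fun ℓ ℓ' h => by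
    change R (f^[ℓ] a) (f^[ℓ'] a)
    rw [h, Function.iterate_succ_apply']
    exact hf _
  exact Nat.card_pos_iff.2 ⟨⟨⟨_, hc⟩⟩, inferInstance⟩

variable [Fintype α] (R) in
def chainsFrom (L : ℕ) (a : α) : ℕ := #{c : Fin (L + 1) → α | IsRelChain R c ∧ c 0 = a}

variable [Fintype α]

lemma chainCount_succ (L : ℕ) : chainCount R (L + 1) = ∑ a, chainsFrom R L a := by
  rw [chainCount, Nat.card_eq_fintype_card, Fintype.card_subtype,
    card_eq_sum_card_fiberwise (f := fun c => c 0) (t := univ) (fun _ _ => mem_univ _)]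
  simp only [chainsFrom, filter_filter]

lemma chainsFrom_zero (a : α) : chainsFrom R 0 a = 1 := by
  rw [chainsFrom, card_eq_one]
  refine ⟨fun _ => a, eq_singleton_iff_unique_mem.2 ⟨by simp [IsRelChain], fun c hc => ?_⟩⟩
  funext j
  rw [Fin.fin_one_eq_zero j, (mem_filter.1 hc).2.2]

lemma chainsFrom_succ (L : ℕ) (a : α) :
    chainsFrom R (L + 1) a = ∑ b with R a b, chainsFrom R L b := by
  have himage : ({c : Fin (L + 2) → α | IsRelChain R c ∧ c 0 = a} : Finset _) =
      image (Fin.cons a) {d : Fin (L + 1) → α | R a (d 0) ∧ IsRelChain R d} := by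
    ext c
    constructor
    · intro hc
      obtain ⟨hchain, rfl⟩ := (mem_filter.1 hc).2
      rw [← Fin.cons_self_tail c, isRelChain_cons] at hchain
      exact mem_image.2 ⟨Fin.tail c, by simpa using hchain, Fin.cons_self_tail c⟩
    · simp only [mem_image, mem_filter, mem_univ, true_and]
      rintro ⟨d, hd, rfl⟩
      exact ⟨(isRelChain_cons a d).2 hd, rfl⟩
  rw [chainsFrom, himage, card_image_of_injective _ (Fin.cons_right_injective (α := fun _ => α) a),
    card_eq_sum_card_fiberwise (f := fun d => d 0) (t := {b | R a b})
      (fun d hd => by simpa using (mem_filter.1 hd).2.1)]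
  refine sum_congr rfl fun b hb => ?_
  rw [filter_filter, chainsFrom]
  congr 1
  ext d
  simp only [mem_filter, mem_univ, true_and]
  constructor
  · exact fun h => ⟨h.1.2, h.2⟩
  · rintro ⟨hd, rfl⟩
    exact ⟨⟨(mem_filter.1 hb).2, hd⟩, rfl⟩

lemma chainCount_le (L : ℕ) : chainCount R L ≤ Fintype.card α ^ L := by
  calc chainCount R L ≤ Nat.card (Fin L → α) := Finite.card_subtype_le _
    _ = Fintype.card α ^ L := by simp [Nat.card_eq_fintype_card]

end ChainCount

section Asymptotics

lemma card_oddsLE (N : ℕ) : #(oddsLE N) = (N + 1) / 2 := by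
  induction N with
  | zero => rfl
  | succ N ih =>
    rw [oddsLE, range_add_one, filter_insert, ← oddsLE]
    split_ifs with h
    · rw [card_insert_of_notMem (fun hN => by have := (mem_oddsLE.1 hN).2; omega), ih]
      obtain ⟨j, hj⟩ := h
      omega
    · rw [Nat.not_odd_iff_even] at h
      rw [ih]
      obtain ⟨j, hj⟩ := h
      omega

lemma oddsLE_mono {a b : ℕ} (h : a ≤ b) : oddsLE a ⊆ oddsLE b := fun _ hi =>
  mem_oddsLE.2 ⟨(mem_oddsLE.1 hi).1, (mem_oddsLE.1 hi).2.trans h⟩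

def oddsAtLevel (n k : ℕ) : Finset ℕ := {i ∈ oddsLE n | Nat.log 2 (n / i) = k}

lemma oddsAtLevel_eq_sdiff (n k : ℕ) :
    oddsAtLevel n k = oddsLE (n / 2 ^ k) \ oddsLE (n / 2 ^ (k + 1)) := by
  ext i
  rw [oddsAtLevel, mem_filter, Finset.mem_sdiff, mem_oddsLE, mem_oddsLE, mem_oddsLE]
  by_cases hodd : Odd i
  swap
  · simp [hodd]
  have hi := hodd.pos
  simp only [hodd, true_and, not_le, Nat.le_div_iff_mul_le (Nat.two_pow_pos _), mul_comm i]
  constructor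
  · rintro ⟨hin, hk⟩
    have h1 := (lt_chainLength_iff hi hin (ℓ := k)).1 (by rw [chainLength]; omega)
    have h2 := mt (lt_chainLength_iff hi hin (ℓ := k + 1)).2 (by rw [chainLength]; omega)
    exact ⟨h1, by omega⟩
  · rintro ⟨h1, h2⟩
    have hin : i ≤ n := le_trans (Nat.le_mul_of_pos_left i (Nat.two_pow_pos k)) h1
    have a := (lt_chainLength_iff hi hin (ℓ := k)).2 h1
    have b := mt (lt_chainLength_iff hi hin (ℓ := k + 1)).1 (by omega)
    rw [chainLength] at a b
    exact ⟨hin, by omega⟩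

lemma card_oddsAtLevel (n k : ℕ) :
    #(oddsAtLevel n k) = (n / 2 ^ k + 1) / 2 - (n / 2 ^ k / 2 + 1) / 2 := by
  rw [oddsAtLevel_eq_sdiff, card_sdiff_of_subset (oddsLE_mono (Nat.div_le_div_left
    (Nat.pow_le_pow_right two_pos k.le_succ) (Nat.two_pow_pos k))), card_oddsLE, card_oddsLE,
    pow_succ, Nat.div_div_eq_div_mul]

lemma card_oddsAtLevel_mul_le (n k : ℕ) : #(oddsAtLevel n k) * 2 ^ k ≤ n := by
  rw [card_oddsAtLevel]
  calc _ ≤ n / 2 ^ k * 2 ^ k := Nat.mul_le_mul_right _ (by generalize n / 2 ^ k = a; omega)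
    _ ≤ n := Nat.div_mul_le_self n _

lemma abs_card_oddsAtLevel_sub_le (n k : ℕ) :
    |(#(oddsAtLevel n k) : ℝ) - n / 2 ^ (k + 2)| ≤ 1 := by
  have hc : 4 * #(oddsAtLevel n k) ≤ n / 2 ^ k + 4 ∧ n / 2 ^ k ≤ 4 * #(oddsAtLevel n k) + 3 := by
    rw [card_oddsAtLevel]
    generalize n / 2 ^ k = a
    omega
  set a := n / 2 ^ k
  set c := #(oddsAtLevel n k)
  have ha : a * 2 ^ k ≤ n ∧ n < (a + 1) * 2 ^ k :=
    ⟨Nat.div_mul_le_self n _, (Nat.div_lt_iff_lt_mul (Nat.two_pow_pos k)).1 a.lt_succ_self⟩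
  have ht : (0 : ℝ) < 2 ^ k := by positivity
  have h1 : (a : ℝ) * 2 ^ k ≤ n := by exact_mod_cast ha.1
  have h2 : (n : ℝ) < (a + 1) * 2 ^ k := by exact_mod_cast ha.2
  have h3 : 4 * (c : ℝ) ≤ a + 4 := by exact_mod_cast hc.1
  have h4 : (a : ℝ) ≤ 4 * c + 3 := by exact_mod_cast hc.2
  have lo : (c : ℝ) - 1 ≤ n / 2 ^ (k + 2) := by
    rw [le_div_iff₀ (by positivity), pow_add]
    nlinarith [mul_le_mul_of_nonneg_right h3 ht.le]
  have hi : (n : ℝ) / 2 ^ (k + 2) ≤ c + 1 := by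
    rw [div_le_iff₀ (by positivity), pow_add]
    nlinarith [mul_le_mul_of_nonneg_right h4 ht.le]
  rw [abs_le]
  constructor <;> linarith

lemma sum_oddsLE_eq_tsum (g : ℕ → ℝ) (n : ℕ) :
    ∑ i ∈ oddsLE n, g (Nat.log 2 (n / i)) = ∑' k, (#(oddsAtLevel n k) : ℝ) * g k := by
  rw [sum_comp, tsum_eq_sum (s := (oddsLE n).image fun i => Nat.log 2 (n / i))]
  · simp only [nsmul_eq_mul, oddsAtLevel]
  · intro k hk
    rw [oddsAtLevel,
      card_eq_zero.2 (filter_eq_empty_iff.2 fun i hi hik => hk (mem_image.2 ⟨i, hi, hik⟩)),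
      Nat.cast_zero, zero_mul]

lemma tendsto_card_oddsAtLevel_div (k : ℕ) :
    Tendsto (fun n : ℕ => (#(oddsAtLevel n k) : ℝ) / n) atTop (𝓝 (1 / 2 ^ (k + 2))) := by
  have herr : Tendsto (fun n : ℕ => ((#(oddsAtLevel n k) : ℝ) - n / 2 ^ (k + 2)) / n) atTop
      (𝓝 0) := by
    refine squeeze_zero_norm (fun n => ?_) tendsto_one_div_atTop_nhds_zero_nat
    rw [norm_div, Real.norm_natCast]
    exact div_le_div_of_nonneg_right (abs_card_oddsAtLevel_sub_le n k) n.cast_nonneg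
  have := herr.add_const (1 / 2 ^ (k + 2))
  rw [zero_add] at this
  refine this.congr' ?_
  filter_upwards [eventually_ne_atTop 0] with n hn
  field_simp
  ring

lemma card_oddsAtLevel_div_le (n k : ℕ) : (#(oddsAtLevel n k) : ℝ) / n ≤ (1 / 2) ^ k := by
  rcases n.eq_zero_or_pos with rfl | hn
  · simp
  have hc : (#(oddsAtLevel n k) : ℝ) * 2 ^ k ≤ n := by
    exact_mod_cast card_oddsAtLevel_mul_le n k
  rw [div_le_iff₀ (by positivity), div_pow, one_pow, div_mul_eq_mul_div, one_mul,
    le_div_iff₀ (by positivity)]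
  exact hc

lemma norm_card_oddsAtLevel_mul_div_le {g : ℕ → ℝ} (hg : ∀ k, |g k| ≤ k + 1) (n k : ℕ) :
    ‖(#(oddsAtLevel n k) : ℝ) * g k / n‖ ≤ (k + 1) * (1 / 2) ^ k := by
  rw [norm_div, norm_mul, Real.norm_natCast, Real.norm_natCast, Real.norm_eq_abs, mul_div_right_comm,
    mul_comm _ ((1 / 2) ^ k)]
  exact mul_le_mul (card_oddsAtLevel_div_le n k) (hg k) (abs_nonneg _) (by positivity)

theorem tendsto_sum_oddsLE_div {g : ℕ → ℝ} (hg : ∀ k, |g k| ≤ k + 1) :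
    Tendsto (fun n : ℕ => (∑ i ∈ oddsLE n, g (Nat.log 2 (n / i))) / n) atTop
      (𝓝 (∑' k, g k / 2 ^ (k + 2))) := by
  simp only [sum_oddsLE_eq_tsum, ← tsum_div_const]
  have hsum : Summable fun k : ℕ => ((k : ℝ) + 1) * (1 / 2) ^ k := by
    have h1 := summable_pow_mul_geometric_of_norm_lt_one 1 (r := (1 / 2 : ℝ)) (by norm_num)
    simpa [add_mul] using h1.add summable_geometric_two
  refine tendsto_tsum_of_dominated_convergence hsum (fun k => ?_)
    (Eventually.of_forall (norm_card_oddsAtLevel_mul_div_le hg))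
  convert (tendsto_card_oddsAtLevel_div k).mul_const (g k) using 2 <;> ring

end Asymptotics

section Dimension

lemma abs_logb_chainCount_le {m : ℕ} (hm : 1 < m) {R : Fin m → Fin m → Prop}
    (hR : ∀ a, ∃ b, R a b) (k : ℕ) : |Real.logb m (chainCount R (k + 1))| ≤ k + 1 := by
  have : NeZero m := ⟨by omega⟩
  have hm' : (1 : ℝ) < m := by exact_mod_cast hm
  have hpos : (1 : ℝ) ≤ chainCount R (k + 1) := by exact_mod_cast chainCount_pos hR (k + 1)
  have hle : (chainCount R (k + 1) : ℝ) ≤ (m : ℝ) ^ (k + 1) := by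
    exact_mod_cast (Fintype.card_fin m ▸ chainCount_le (R := R) (k + 1))
  rw [abs_of_nonneg (Real.logb_nonneg hm' hpos)]
  calc _ ≤ Real.logb m ((m : ℝ) ^ (k + 1)) := Real.logb_le_logb_of_le hm' (by linarith) hle
    _ = k + 1 := by rw [Real.logb_pow, Real.logb_self_eq_one hm']; push_cast; ring

theorem tendsto_logb_nwords_multShift_div {m : ℕ} (hm : 1 < m) {R : Fin m → Fin m → Prop}
    (hR : ∀ a, ∃ b, R a b) :
    Tendsto (fun n : ℕ => Real.logb m (NWords n (multShift R)) / n) atTop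
      (𝓝 (∑' k, Real.logb m (chainCount R (k + 1)) / 2 ^ (k + 2))) := by
  have : NeZero m := ⟨by omega⟩
  have hlog (n : ℕ) : Real.logb m (NWords n (multShift R)) =
      ∑ i ∈ oddsLE n, Real.logb m (chainCount R (Nat.log 2 (n / i) + 1)) := by
    rw [nwords_multShift hR, Nat.cast_prod,
      Real.logb_prod _ _ fun i _ => Nat.cast_ne_zero.2 (chainCount_pos hR _).ne']
    rfl
  simp only [hlog]
  exact tendsto_sum_oddsLE_div (abs_logb_chainCount_le hm hR)

end Dimension

section Tribonacci

def tribRel (a b : Fin 3) : Prop := (a = 1 → b = 0) ∧ (a = 2 → b = 1)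

lemma exists_tribRel (a : Fin 3) : ∃ b, tribRel a b := by
  fin_cases a
  exacts [⟨0, by simp [tribRel]⟩, ⟨0, by simp [tribRel]⟩, ⟨1, by simp [tribRel]⟩]

lemma chainsFrom_tribRel_succ (L : ℕ) :
    chainsFrom tribRel (L + 1) 0 = chainCount tribRel (L + 1) ∧
      chainsFrom tribRel (L + 1) 1 = chainsFrom tribRel L 0 ∧
      chainsFrom tribRel (L + 1) 2 = chainsFrom tribRel L 1 := by
  simp [chainsFrom_succ, chainCount_succ, Finset.sum_filter, Fin.sum_univ_three, tribRel]

lemma chainCount_tribRel_succ (L : ℕ) :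
    chainCount tribRel (L + 1) =
      chainsFrom tribRel L 0 + chainsFrom tribRel L 1 + chainsFrom tribRel L 2 := by
  rw [chainCount_succ, Fin.sum_univ_three]

lemma chainCount_tribRel_add_four (L : ℕ) :
    chainCount tribRel (L + 4) =
      chainCount tribRel (L + 1) + chainCount tribRel (L + 2) + chainCount tribRel (L + 3) := by
  obtain ⟨h0, h1, h2⟩ := chainsFrom_tribRel_succ (L + 2)
  obtain ⟨h0', h1', -⟩ := chainsFrom_tribRel_succ (L + 1)
  obtain ⟨h0'', -, -⟩ := chainsFrom_tribRel_succ L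
  rw [chainCount_tribRel_succ (L + 3), h0, h1, h2, h0', h1', h0'']
  ring

lemma chainCount_tribRel_eq {T : ℕ → ℕ} (hT0 : T 0 = 3) (hT1 : T 1 = 5) (hT2 : T 2 = 9)
    (hTrec : ∀ k, T (k + 3) = T k + T (k + 1) + T (k + 2)) (k : ℕ) :
    chainCount tribRel (k + 1) = T k := by
  have hp0 := chainsFrom_tribRel_succ 0
  have hp1 := chainsFrom_tribRel_succ 1
  have hs0 : chainCount tribRel 1 = 3 := by
    simp [chainCount_tribRel_succ, chainsFrom_zero]
  have hs1 : chainCount tribRel 2 = 5 := by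
    rw [chainCount_tribRel_succ, hp0.1, hp0.2.1, hp0.2.2, hs0, chainsFrom_zero, chainsFrom_zero]
  have hs2 : chainCount tribRel 3 = 9 := by
    rw [chainCount_tribRel_succ, hp1.1, hp1.2.1, hp1.2.2, hs1, hp0.1, hp0.2.1, hs0,
      chainsFrom_zero]
  suffices ∀ k, chainCount tribRel (k + 1) = T k ∧ chainCount tribRel (k + 2) = T (k + 1) ∧
      chainCount tribRel (k + 3) = T (k + 2) from (this k).1
  intro k
  induction k with
  | zero => exact ⟨hs0.trans hT0.symm, hs1.trans hT1.symm, hs2.trans hT2.symm⟩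
  | succ k ih =>
    refine ⟨ih.2.1, ih.2.2, ?_⟩
    rw [chainCount_tribRel_add_four, hTrec, ih.1, ih.2.1, ih.2.2]

end Tribonacci

end MultShift

/-- **Example (multiplicative Tribonacci), Minkowski dimension.**
`dim_M(X) = Σ_{k≥1} log₃ T_{k-1}/2^{k+1}` where `T_0 = 3, T_1 = 5, T_2 = 9`,
`T_{k+2} = T_{k-1} + T_k + T_{k+1}`. -/
theorem stmt17 (T : ℕ → ℕ) (hT0 : T 0 = 3) (hT1 : T 1 = 5) (hT2 : T 2 = 9)
    (hTrec : ∀ k : ℕ, T (k + 3) = T k + T (k + 1) + T (k + 2)) :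
    Tendsto
      (fun n : ℕ =>
        Real.logb 3
          (NWords n {x : ℕ+ → Fin 3 | ∀ k : ℕ+,
            (x k = 1 → x (2 * k) = 0) ∧ (x k = 2 → x (2 * k) = 1)}) / n)
      atTop (𝓝 (∑' k : ℕ, Real.logb 3 (T k) / 2 ^ (k + 2))) := by
  have h := MultShift.tendsto_logb_nwords_multShift_div (by norm_num : 1 < 3)
    MultShift.exists_tribRel
  simp only [MultShift.chainCount_tribRel_eq hT0 hT1 hT2 hTrec, Nat.cast_ofNat] at h
  exact h
end
end

section
/- Let m ≥ 2, let q ≥ 2 be an integer, and let Ω be a nonempty closed subset of Σ_m. Let t be the unique [1, m^{1/(q-1)}]-valued solution of t(u)^q = Σ_{j : uj ∈ Pref(Ω)} t(uj) on the tree of prefixes of Ω, let μ be the measure on Ω with μ[u₁…u_k] = ∏_{j=1}^k t(u₁…u_j)/t(u₁…u_{j-1})^q, and let P_μ be the measure on X_Ω with P_μ[u] = ∏_{i ≤ |u|, q ∤ i} μ[u|J_i]. For x ∈ X_Ω and ℓ ≥ 1, set a_ℓ(x) = (−log_m P_μ[x₁…x_{q^ℓ}]) / q^ℓ. Then for every x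 ∈ X_Ω, the Cesàro averages (a₁(x) + ⋯ + a_ℓ(x))/ℓ converge to (q−1)·log_m t(∅) as ℓ → ∞; in particular liminf_{ℓ→∞} a_ℓ(x) ≤ (q−1)·log_m t(∅) for every x ∈ X_Ω. -/
open scoped Classical ENNReal
open Filter MeasureTheory Topology

noncomputable section

/-!
Write `τ = log_m t` and `w_i(k)` for the first `k` letters of `x|J_i`. The cylinder formula for `μ`
turns `log_m μ[w_i(k)]` into `∑_{j<k} (τ(w_i(j+1)) - q τ(w_i(j)))`, and `P_μ[x₁…x_n]` is a product
over the chains `J_i` (`q ∤ i`) cut at `n`. Passing from `n = q^ℓ` to `n = q^(ℓ+1)` lengthens each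
old chain by one link and adds `q^(ℓ+1) - q^ℓ` chains of length one, which gives
`a_{ℓ+1} = (q-1) τ(∅) + G_ℓ - G_{ℓ+1}` with `G_ℓ = q^{-ℓ} ∑ τ(w_i(j+1))` over `q ∤ i`,
`q^j i ≤ q^ℓ`. The integers `q^j i` are distinct, so `0 ≤ G_ℓ ≤ 1/(q-1)`, and the Cesàro averages
of `a_ℓ` telescope.
-/

section Cesaro

open Finset

theorem tendsto_cesaro_of_telescoping {a G : ℕ → ℝ} {c B : ℝ} (hG : ∀ ℓ, |G ℓ| ≤ B)
    (ha : ∀ ℓ, a (ℓ + 1) = c + G ℓ - G (ℓ + 1)) :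
    Tendsto (fun L : ℕ => (∑ ℓ ∈ Icc 1 L, a ℓ) / L) atTop (𝓝 c) := by
  have hsum : ∀ L : ℕ, ∑ ℓ ∈ Icc 1 L, a ℓ = L * c + (G 0 - G L) := by
    intro L
    rw [← Finset.Ico_add_one_right_eq_Icc, sum_Ico_eq_sum_range, Nat.add_sub_cancel]
    simp only [add_comm 1, ha, add_sub_assoc, sum_add_distrib, sum_range_sub', sum_const,
      card_range, nsmul_eq_mul]
  have hrem : Tendsto (fun L : ℕ => (G 0 - G L) / L) atTop (𝓝 0) := by
    refine squeeze_zero_norm (fun L => ?_) (tendsto_const_div_atTop_nhds_zero_nat (2 * B))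
    rw [norm_div, Real.norm_natCast]
    gcongr
    have h2B : ‖G 0‖ + ‖G L‖ ≤ 2 * B := by
      simp only [Real.norm_eq_abs]; linarith [hG 0, hG L]
    exact (norm_sub_le _ _).trans h2B
  have hlim : Tendsto (fun L : ℕ => c + (G 0 - G L) / L) atTop (𝓝 c) := by
    simpa using tendsto_const_nhds.add hrem
  refine hlim.congr' ?_
  filter_upwards [eventually_ge_atTop 1] with L hL
  rw [hsum, add_div, mul_div_cancel_left₀ _ (by positivity)]

theorem liminf_le_of_tendsto_cesaro {a : ℕ → ℝ} {c : ℝ}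
    (hbdd : IsBoundedUnder (· ≥ ·) atTop a)
    (h : Tendsto (fun L : ℕ => (∑ ℓ ∈ Icc 1 L, a ℓ) / L) atTop (𝓝 c)) :
    liminf a atTop ≤ c := by
  refine le_of_forall_lt_imp_le_of_dense fun c' hc' => ?_
  obtain ⟨N, hN⟩ := eventually_atTop.1 (eventually_lt_of_lt_liminf hc' hbdd)
  set D := ∑ ℓ ∈ Icc 1 N, min (a ℓ - c') 0
  have hlow : ∀ L ≥ max N 1, c' + D / L ≤ (∑ ℓ ∈ Icc 1 L, a ℓ) / L := by
    intro L hL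
    have hL1 : (0 : ℝ) < L := by have := le_of_max_le_right hL; positivity
    have hD : D = ∑ ℓ ∈ Icc 1 L, min (a ℓ - c') 0 := by
      refine sum_subset (Icc_subset_Icc_right (le_of_max_le_left hL)) fun ℓ hℓ hℓN => ?_
      simp only [mem_Icc, not_and, not_le] at hℓ hℓN
      exact min_eq_right (sub_nonneg.2 (hN ℓ (hℓN hℓ.1).le).le)
    rw [le_div_iff₀ hL1, add_mul, div_mul_cancel₀ _ hL1.ne', hD]
    calc c' * L + ∑ ℓ ∈ Icc 1 L, min (a ℓ - c') 0
        = ∑ ℓ ∈ Icc 1 L, (c' + min (a ℓ - c') 0) := by simp [sum_add_distrib, mul_comm]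
      _ ≤ ∑ ℓ ∈ Icc 1 L, a ℓ :=
        sum_le_sum fun ℓ _ => by linarith [min_le_left (a ℓ - c') 0]
  have hlim : Tendsto (fun L : ℕ => c' + D / L) atTop (𝓝 c') := by
    simpa using tendsto_const_nhds.add (tendsto_const_div_atTop_nhds_zero_nat D)
  exact le_of_tendsto_of_tendsto hlim h (eventually_atTop.2 ⟨_, hlow⟩)

theorem isBoundedUnder_ge_of_telescoping {a G : ℕ → ℝ} {c B : ℝ}
    (hG : ∀ ℓ, |G ℓ| ≤ B)
    (ha : ∀ ℓ, a (ℓ + 1) = c + G ℓ - G (ℓ + 1)) : IsBoundedUnder (· ≥ ·) atTop a :=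
  isBoundedUnder_of_eventually_ge (a := c - 2 * B) <| eventually_atTop.2 ⟨1, fun ℓ hℓ => by
    obtain ⟨k, rfl⟩ := Nat.exists_eq_add_of_le' hℓ
    linarith [ha k, abs_le.1 (hG k), abs_le.1 (hG (k + 1))]⟩

end Cesaro

namespace MultiplicativeSubshift

open Finset Real

variable {m : ℕ} {q : ℕ+} {Ω : Set (ℕ+ → Fin m)} {t : List (Fin m) → ℝ}
  {μ P : Measure (ℕ+ → Fin m)} {x : ℕ+ → Fin m}

def prefixWord (y : ℕ+ → Fin m) (k : ℕ) : List (Fin m) :=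
  List.ofFn fun j : Fin k => y ⟨(j : ℕ) + 1, Nat.succ_pos _⟩

@[simp]
lemma length_prefixWord (y : ℕ+ → Fin m) (k : ℕ) : (prefixWord y k).length = k :=
  List.length_ofFn

lemma begins_prefixWord (y : ℕ+ → Fin m) (k : ℕ) : Begins y (prefixWord y k) :=
  fun j => (List.get_ofFn _ j).symm

lemma take_prefixWord (y : ℕ+ → Fin m) {j k : ℕ} (h : j ≤ k) :
    (prefixWord y k).take j = prefixWord y j :=
  List.ext_getElem (by simp [h]) fun l _ _ => by simp [prefixWord]

lemma begins_take {u : List (Fin m)} (h : Begins x u) (j : ℕ) :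
    Begins x (u.take j) := fun k => by
  simpa using h ⟨k, (List.length_take_le' j u).trans_lt' k.isLt⟩

lemma take_mem_pref {u : List (Fin m)} (hu : u ∈ Pref Ω) (j : ℕ) :
    u.take j ∈ Pref Ω :=
  let ⟨x, hx, hxu⟩ := hu
  ⟨x, hx, begins_take hxu j⟩

lemma prefixWord_mem_pref {y : ℕ+ → Fin m} (hy : y ∈ Ω) (k : ℕ) :
    prefixWord y k ∈ Pref Ω :=
  ⟨y, hy, begins_prefixWord y k⟩

def chainLength (q n i : ℕ+) : ℕ := Nat.log q (n / i) + 1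

def nonMultiples (q n : ℕ+) : Finset ℕ+ := (Icc 1 n).filter fun i => ¬ q ∣ i

lemma pow_mul_le_iff_lt_chainLength (hq : 2 ≤ (q : ℕ)) {n i : ℕ+} (hi : i ≤ n) (j : ℕ) :
    q ^ j * i ≤ n ↔ j < chainLength q n i := by
  have hdiv : (n : ℕ) / i ≠ 0 := (Nat.div_pos (PNat.coe_le_coe _ _ |>.2 hi) i.pos).ne'
  rw [← PNat.coe_le_coe, PNat.mul_coe, PNat.pow_coe, chainLength, Nat.lt_succ_iff,
    Nat.le_log_iff_pow_le (by omega) hdiv, Nat.le_div_iff_mul_le i.pos]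

lemma chainLength_mul (hq : 2 ≤ (q : ℕ)) {n i : ℕ+} (hi : i ≤ n) :
    chainLength q (q * n) i = chainLength q n i + 1 := by
  have hi' : i ≤ q * n := hi.trans (le_mul_of_one_le_left' one_le)
  have key : ∀ j, j + 1 < chainLength q (q * n) i ↔ j < chainLength q n i := fun j => by
    rw [← pow_mul_le_iff_lt_chainLength hq hi', ← pow_mul_le_iff_lt_chainLength hq hi,
      pow_succ', mul_assoc, mul_le_mul_iff_left]
  have := key (chainLength q n i)
  have := key (chainLength q n i - 1)
  have : 0 < chainLength q n i := Nat.succ_pos _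
  omega

lemma chainLength_eq_one (hq : 2 ≤ (q : ℕ)) {n i : ℕ+} (hi : i ≤ n) (h : n < q * i) :
    chainLength q n i = 1 := by
  have := (pow_mul_le_iff_lt_chainLength hq hi 1).not.1 (by simpa using h)
  have : 0 < chainLength q n i := Nat.succ_pos _
  omega

lemma cylJ_eq_cyl (hq : 2 ≤ (q : ℕ)) {n i : ℕ+} (hi : i ≤ n) (x : ℕ+ → Fin m) :
    CylJ q n i x = Cyl (prefixWord (RestrJ q x i) (chainLength q n i)) := by
  ext y
  simp only [CylJ, Cyl, Begins, Set.mem_ofPred_eq, prefixWord, List.get_ofFn]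
  constructor
  · intro h j
    exact h j ((pow_mul_le_iff_lt_chainLength hq hi j).2 (by simpa using j.isLt))
  · intro h ℓ hℓ
    exact h ⟨ℓ, by simpa using (pow_mul_le_iff_lt_chainLength hq hi ℓ).1 hℓ⟩

lemma eq_of_pow_mul_eq_pow_mul {i i' : ℕ+} {j j' : ℕ} (hi : ¬ q ∣ i) (hi' : ¬ q ∣ i')
    (h : q ^ j * i = q ^ j' * i') : j = j' ∧ i = i' := by
  wlog hjj : j ≤ j' generalizing j j' i i'
  · exact (this hi' hi h.symm (le_of_not_ge hjj)).imp Eq.symm Eq.symm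
  obtain ⟨d, rfl⟩ := Nat.exists_eq_add_of_le hjj
  rw [pow_add, mul_assoc] at h
  obtain rfl := mul_left_cancel h
  cases d with
  | zero => simp
  | succ d => exact absurd ⟨q ^ d * i', by ring⟩ hi

lemma sum_chainLength_le (hq : 2 ≤ (q : ℕ)) (n : ℕ+) :
    ∑ i ∈ nonMultiples q n, chainLength q n i ≤ n := by
  have hinj := card_le_card_of_injOn (fun p : (_ : ℕ+) × ℕ => q ^ p.2 * p.1)
    (s := (nonMultiples q n).sigma fun i => range (chainLength q n i)) (t := Icc 1 n)
    (fun ⟨i, j⟩ hp => by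
      simp only [coe_sigma, Set.mem_sigma_iff, nonMultiples, coe_filter, mem_Icc,
        Set.mem_ofPred_eq, coe_range, Set.mem_Iio] at hp
      simpa using (pow_mul_le_iff_lt_chainLength hq hp.1.1.2 j).2 hp.2)
    (fun ⟨i, j⟩ hp ⟨i', j'⟩ hp' h => by
      simp only [coe_sigma, Set.mem_sigma_iff, nonMultiples, coe_filter,
        Set.mem_ofPred_eq] at hp hp'
      obtain ⟨rfl, rfl⟩ := eq_of_pow_mul_eq_pow_mul hp.1.2 hp'.1.2 h
      rfl)
  simpa using hinj

lemma card_nonMultiples_mul_add (n : ℕ+) : #(nonMultiples q (q * n)) + n = q * n := by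
  have hmul : (Icc 1 (q * n)).filter (q ∣ ·) = (Icc 1 n).map (mulLeftEmbedding q) := by
    ext a
    simp only [mem_filter, mem_Icc, Finset.mem_map, mulLeftEmbedding_apply]
    constructor
    · rintro ⟨⟨-, ha⟩, c, rfl⟩
      exact ⟨c, ⟨one_le, le_of_mul_le_mul_left' ha⟩, rfl⟩
    · rintro ⟨c, ⟨-, hc⟩, rfl⟩
      exact ⟨⟨one_le, by gcongr⟩, dvd_mul_right q c⟩
  have := card_filter_add_card_filter_not (s := Icc 1 (q * n)) (q ∣ ·)
  rw [hmul, card_map, PNat.card_Icc, PNat.card_Icc] at this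
  simp only [PNat.mul_coe, PNat.one_coe] at this
  simp only [nonMultiples]
  omega

def chainSum (q : ℕ+) (g : ℕ+ → ℕ → ℝ) (n : ℕ+) : ℝ :=
  ∑ i ∈ nonMultiples q n, ∑ j ∈ range (chainLength q n i), g i (j + 1)

lemma sum_range_pred_chainLength_mul (hq : 2 ≤ (q : ℕ)) (g : ℕ+ → ℕ → ℝ) (n : ℕ+) :
    ∑ i ∈ nonMultiples q (q * n), ∑ j ∈ range (chainLength q (q * n) i - 1), g i (j + 1) =
      chainSum q g n := by
  have hsub : nonMultiples q n ⊆ nonMultiples q (q * n) :=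
    filter_subset_filter _ (Icc_subset_Icc_right (le_mul_of_one_le_left' one_le))
  rw [chainSum, ← sum_subset hsub]
  · refine sum_congr rfl fun i hi => ?_
    rw [chainLength_mul hq (mem_Icc.1 (mem_filter.1 hi).1).2, Nat.add_sub_cancel]
  · intro i hi hin
    simp only [nonMultiples, mem_filter, mem_Icc, not_and] at hi hin
    have hni : n < i := lt_of_not_ge fun h => hin ⟨hi.1.1, h⟩ hi.2
    rw [chainLength_eq_one hq hi.1.2 (by gcongr), Nat.sub_self, sum_range_zero]

lemma sum_sub_mul_chainLength_mul (hq : 2 ≤ (q : ℕ)) (g : ℕ+ → ℕ → ℝ) (n : ℕ+) :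
    ∑ i ∈ nonMultiples q (q * n), ∑ j ∈ range (chainLength q (q * n) i),
        (g i (j + 1) - q * g i j) =
      chainSum q g (q * n) - q * chainSum q g n - q * ∑ i ∈ nonMultiples q (q * n), g i 0 := by
  have hsplit : ∀ i, ∑ j ∈ range (chainLength q (q * n) i), (g i (j + 1) - q * g i j) =
      ∑ j ∈ range (chainLength q (q * n) i), g i (j + 1)
        - q * ∑ j ∈ range (chainLength q (q * n) i - 1), g i (j + 1) - q * g i 0 := fun i => by
    obtain ⟨k, hk⟩ : ∃ k, chainLength q (q * n) i = k + 1 := ⟨_, rfl⟩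
    rw [sum_sub_distrib, ← mul_sum, hk, sum_range_succ' (fun j => g i j), Nat.add_sub_cancel]
    ring
  simp only [hsplit, sum_sub_distrib, ← mul_sum, sum_range_pred_chainLength_mul hq, chainSum]

lemma chainSum_mem_Icc (hq : 2 ≤ (q : ℕ)) {g : ℕ+ → ℕ → ℝ} {B : ℝ}
    (hg : ∀ i, ¬ q ∣ i → ∀ j, g i (j + 1) ∈ Set.Icc 0 B) (n : ℕ+) :
    chainSum q g n ∈ Set.Icc 0 (B * n) := by
  have hg' : ∀ i ∈ nonMultiples q n, ∀ j, g i (j + 1) ∈ Set.Icc 0 B :=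
    fun i hi => hg i (mem_filter.1 hi).2
  refine ⟨sum_nonneg fun i hi => sum_nonneg fun j _ => (hg' i hi j).1, ?_⟩
  have hB : 0 ≤ B := by
    have h1 : ¬ q ∣ 1 := fun h => by simp [(PNat.dvd_one_iff q).1 h] at hq
    exact (hg 1 h1 0).1.trans (hg 1 h1 0).2
  calc chainSum q g n ≤ ∑ i ∈ nonMultiples q n, chainLength q n i * B :=
        sum_le_sum fun i hi => by
          simpa using sum_le_card_nsmul (range (chainLength q n i)) _ B fun j _ => (hg' i hi j).2
    _ = B * (∑ i ∈ nonMultiples q n, chainLength q n i : ℕ) := by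
        rw [← sum_mul, mul_comm]; push_cast; rfl
    _ ≤ B * n := by gcongr; exact_mod_cast sum_chainLength_le hq n

def chainLogb (m : ℕ) (q : ℕ+) (x : ℕ+ → Fin m) (t : List (Fin m) → ℝ) (i : ℕ+) (j : ℕ) :
    ℝ :=
  logb m (t (prefixWord (RestrJ q x i) j))

lemma TSol.pos (ht : TSol q Ω t) {u : List (Fin m)} (hu : u ∈ Pref Ω) : 0 < t u :=
  one_pos.trans_le (ht u hu).1.1

lemma TSol.logb_mem_Icc (hm : 2 ≤ m) (ht : TSol q Ω t) {u : List (Fin m)}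
    (hu : u ∈ Pref Ω) : logb m (t u) ∈ Set.Icc 0 (1 / ((q : ℝ) - 1)) := by
  have hm1 : (1 : ℝ) < m := by exact_mod_cast hm
  obtain ⟨h1, h2⟩ := (ht u hu).1
  refine ⟨logb_nonneg hm1 h1, ?_⟩
  calc logb m (t u) ≤ logb m ((m : ℝ) ^ (1 / ((q : ℝ) - 1))) :=
        logb_le_logb_of_le hm1 (TSol.pos ht hu) h2
    _ = 1 / ((q : ℝ) - 1) := logb_rpow (by positivity) hm1.ne'

lemma TSol.div_pow_pos (ht : TSol q Ω t) {u : List (Fin m)} (hu : u ∈ Pref Ω) (j : ℕ) :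
    0 < t (u.take (j + 1)) / t (u.take j) ^ (q : ℕ) :=
  div_pos (TSol.pos ht (take_mem_pref hu _)) (pow_pos (TSol.pos ht (take_mem_pref hu _)) _)

lemma toReal_measure_cyl (ht : TSol q Ω t) (hcyl : CylVals q Ω t μ) {u : List (Fin m)}
    (hu : u ∈ Pref Ω) :
    (μ (Cyl u)).toReal =
      ∏ j ∈ range u.length, t (u.take (j + 1)) / t (u.take j) ^ (q : ℕ) := by
  rw [hcyl u hu, ENNReal.toReal_ofReal (prod_nonneg fun j _ => (TSol.div_pow_pos ht hu j).le)]

lemma toReal_measure_cyl_pos (ht : TSol q Ω t) (hcyl : CylVals q Ω t μ) {u : List (Fin m)}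
    (hu : u ∈ Pref Ω) : 0 < (μ (Cyl u)).toReal := by
  rw [toReal_measure_cyl ht hcyl hu]
  exact prod_pos fun j _ => TSol.div_pow_pos ht hu j

lemma logb_toReal_measure_cyl (ht : TSol q Ω t) (hcyl : CylVals q Ω t μ) {u : List (Fin m)}
    (hu : u ∈ Pref Ω) :
    logb m (μ (Cyl u)).toReal =
      ∑ j ∈ range u.length, (logb m (t (u.take (j + 1))) - q * logb m (t (u.take j))) := by
  have hpos : ∀ j, 0 < t (u.take j) := fun j => TSol.pos ht (take_mem_pref hu j)
  rw [toReal_measure_cyl ht hcyl hu, logb_prod _ _ fun j _ => (TSol.div_pow_pos ht hu j).ne']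
  refine sum_congr rfl fun j _ => ?_
  rw [logb_div (hpos _).ne' (pow_pos (hpos _) _).ne', logb_pow]

lemma logb_toReal_measure_cylN (hq : 2 ≤ (q : ℕ)) (ht : TSol q Ω t) (hcyl : CylVals q Ω t μ)
    (hP : ProdProp q μ P) (hx : x ∈ XOm q Ω) (n : ℕ+) :
    logb m (P (CylN n x)).toReal =
      ∑ i ∈ nonMultiples q n, ∑ j ∈ range (chainLength q n i),
        (chainLogb m q x t i (j + 1) - q * chainLogb m q x t i j) := by
  have hJ : ∀ i ∈ nonMultiples q n, CylJ q n i x = Cyl _ := fun i hi =>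
    cylJ_eq_cyl hq (mem_Icc.1 (mem_filter.1 hi).1).2 x
  have hpref : ∀ i ∈ nonMultiples q n, ∀ k, prefixWord (RestrJ q x i) k ∈ Pref Ω :=
    fun i hi => prefixWord_mem_pref (hx i (mem_filter.1 hi).2)
  rw [hP n x, ENNReal.toReal_prod, logb_prod _ _ fun i hi => by
    rw [hJ i hi]; exact (toReal_measure_cyl_pos ht hcyl (hpref i hi _)).ne']
  refine sum_congr rfl fun i hi => ?_
  rw [hJ i hi, logb_toReal_measure_cyl ht hcyl (hpref i hi _), length_prefixWord]
  refine sum_congr rfl fun j hj => ?_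
  rw [take_prefixWord _ (mem_range.1 hj), take_prefixWord _ (mem_range.1 hj).le]
  rfl

lemma logb_toReal_measure_cylN_mul (hq : 2 ≤ (q : ℕ)) (ht : TSol q Ω t)
    (hcyl : CylVals q Ω t μ) (hP : ProdProp q μ P) (hx : x ∈ XOm q Ω) (n : ℕ+) :
    logb m (P (CylN (q * n : ℕ+) x)).toReal =
      chainSum q (chainLogb m q x t) (q * n) - q * chainSum q (chainLogb m q x t) n
        - q * ((q * n - n) * logb m (t [])) := by
  have hcard : (#(nonMultiples q (q * n)) : ℝ) = q * n - n := by
    rw [eq_sub_iff_add_eq]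
    exact_mod_cast card_nonMultiples_mul_add n
  rw [logb_toReal_measure_cylN hq ht hcyl hP hx, sum_sub_mul_chainLength_mul hq]
  simp [chainLogb, prefixWord, hcard]

lemma neg_logb_toReal_measure_cylN_pow_succ (hq : 2 ≤ (q : ℕ)) (ht : TSol q Ω t)
    (hcyl : CylVals q Ω t μ) (hP : ProdProp q μ P) (hx : x ∈ XOm q Ω) (ℓ : ℕ) :
    -logb m (P (CylN ((q : ℕ) ^ (ℓ + 1)) x)).toReal / ((q : ℕ) : ℝ) ^ (ℓ + 1) =
      ((q : ℝ) - 1) * logb m (t [])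
        + chainSum q (chainLogb m q x t) (q ^ ℓ) / (q : ℝ) ^ ℓ
        - chainSum q (chainLogb m q x t) (q ^ (ℓ + 1)) / (q : ℝ) ^ (ℓ + 1) := by
  have hpow : (q : ℕ) ^ (ℓ + 1) = ((q * q ^ ℓ : ℕ+) : ℕ) := by
    rw [← pow_succ', PNat.pow_coe]
  have hq0 : (q : ℝ) ≠ 0 := by positivity
  rw [hpow, logb_toReal_measure_cylN_mul hq ht hcyl hP hx, ← pow_succ']
  push_cast
  field_simp
  ring

lemma abs_chainSum_div_pow_le (hm : 2 ≤ m) (hq : 2 ≤ (q : ℕ)) (ht : TSol q Ω t)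
    (hx : x ∈ XOm q Ω) (ℓ : ℕ) :
    |chainSum q (chainLogb m q x t) (q ^ ℓ) / (q : ℝ) ^ ℓ| ≤ 1 / ((q : ℝ) - 1) := by
  obtain ⟨h0, h1⟩ := chainSum_mem_Icc hq (g := chainLogb m q x t) (n := q ^ ℓ)
    (fun i hi j => TSol.logb_mem_Icc hm ht (prefixWord_mem_pref (hx i hi) (j + 1)))
  have hqℓ : (0 : ℝ) < (q : ℝ) ^ ℓ := by positivity
  rw [abs_of_nonneg (div_nonneg h0 hqℓ.le), div_le_iff₀ hqℓ]
  simpa using h1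

end MultiplicativeSubshift

theorem stmt19_general (m : ℕ) (hm : 2 ≤ m) (q : ℕ+) (hq : 2 ≤ (q : ℕ))
    (Ω : Set (ℕ+ → Fin m))
    (t : List (Fin m) → ℝ) (ht : TSol q Ω t)
    (μ : Measure (ℕ+ → Fin m))
    (hcyl : CylVals q Ω t μ)
    (P : Measure (ℕ+ → Fin m)) (hP : ProdProp q μ P) :
    ∀ x ∈ XOm q Ω,
      Tendsto
        (fun L : ℕ =>
          (∑ ℓ ∈ Finset.Icc 1 L,
            -Real.logb m ((P (CylN ((q : ℕ) ^ ℓ) x)).toReal) / ((q : ℕ) : ℝ) ^ ℓ) / L)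
        atTop (𝓝 (((q : ℝ) - 1) * Real.logb m (t []))) ∧
      Filter.liminf
        (fun ℓ : ℕ =>
          -Real.logb m ((P (CylN ((q : ℕ) ^ ℓ) x)).toReal) / ((q : ℕ) : ℝ) ^ ℓ)
        atTop ≤ ((q : ℝ) - 1) * Real.logb m (t []) := by
  intro x hx
  have hG := MultiplicativeSubshift.abs_chainSum_div_pow_le hm hq ht hx
  have ha := MultiplicativeSubshift.neg_logb_toReal_measure_cylN_pow_succ hq ht hcyl hP hx
  refine ⟨?ces, liminf_le_of_tendsto_cesaro ?bdd ?ces⟩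
  case ces => exact tendsto_cesaro_of_telescoping hG ha
  case bdd => exact isBoundedUnder_ge_of_telescoping hG ha

/-- **Lemma 5.2.** For every `x ∈ X_Ω`, the Cesàro averages of
`a_ℓ(x) = -log_m P_μ[x₁…x_{q^ℓ}]/q^ℓ` converge to `(q-1) log_m t(∅)`; in particular
`liminf_ℓ a_ℓ(x) ≤ (q-1) log_m t(∅)`. -/
theorem stmt19 (m : ℕ) (hm : 2 ≤ m) (q : ℕ+) (hq : 2 ≤ (q : ℕ))
    (Ω : Set (ℕ+ → Fin m)) (hne : Ω.Nonempty) (hcl : IsClosed Ω)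
    (t : List (Fin m) → ℝ) (ht : TSol q Ω t)
    (μ : Measure (ℕ+ → Fin m)) [IsProbabilityMeasure μ] (hμΩ : μ Ω = 1)
    (hcyl : CylVals q Ω t μ)
    (P : Measure (ℕ+ → Fin m)) [IsProbabilityMeasure P] (hP : ProdProp q μ P) :
    ∀ x ∈ XOm q Ω,
      Tendsto
        (fun L : ℕ =>
          (∑ ℓ ∈ Finset.Icc 1 L,
            -Real.logb m ((P (CylN ((q : ℕ) ^ ℓ) x)).toReal) / ((q : ℕ) : ℝ) ^ ℓ) / L)
        atTop (𝓝 (((q : ℝ) - 1) * Real.logb m (t []))) ∧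
      Filter.liminf
        (fun ℓ : ℕ =>
          -Real.logb m ((P (CylN ((q : ℕ) ^ ℓ) x)).toReal) / ((q : ℕ) : ℝ) ^ ℓ)
        atTop ≤ ((q : ℝ) - 1) * Real.logb m (t []) :=
  stmt19_general m hm q hq Ω t ht μ hcyl P hP
end
end
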